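/- arXiv:2505.02588 — 7 statements merged into one kernel-verified Lean document; each statement's English description precedes it below -/
import Mathlib

section
/- Let S ⊆ ℝ^n be nonempty, convex and compact, φ : ℝ^n → ℝ differentiable with ℓ-Lipschitz continuous gradient, A : ℝ^n → ℝ^s and K : ℝ^n → ℝ^p linear maps, σ_A := ‖A‖², and let G : ℝ^s → ℝ ∪ {+∞} and H : ℝ^p → ℝ ∪ {+∞} be proper, convex and lower semicontinuous (in the paper G = g* and H = f* are Fenchel conjugates of the convex parts). Suppose the parameter sequences satisfy α_k ≥ α_{k+1} > α > 0, δ_k = α/α_k, β_k > 0 and ρ_k > ℓ/2 for all k ≥ 0. Let x^0 ∈ S, y^0 ∈ ℝ^p, z^0 ∈ ℝ^s and for all k ≥ 0 define: x^{k+1} as the point of S minimizing the distance to x^k − (1/ρ_k)(A*z^k − K*y^k + ∇φ(x^k)); y^{k+1} as the unique minimizer over ℝ^p of y ↦ H(y) − ⟨K x^{k+1}, y⟩ + (β_k/2)‖y − y^k‖²; and z^{k+1} as the unique minimizer over ℝ^s of z ↦ G(z) − ⟨A x^{k+1}, z⟩ + (α_k/2)‖z − δ_k z^k‖². Define Ψ(x,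 y, z) = ⟨z, A x⟩ − G(z) + φ(x) − ⟨K x, y⟩ + H(y), and for k ≥ 2 set ψ_k = Ψ(x^k, y^k, z^k) + α(1/2 + 2α/(α_k − α))‖z^k − z^{k−1}‖² − ((1/2)(α_{k−2} − α) − 2α(α_{k−1} − α_{k−2})/(α_{k−1} − α))‖z^k‖² and ω_k = [(1/2)(α_{k−2} − α_{k−1}) + 2α((α_{k−2} − α_{k−1})/(α_{k−1} − α) − (α_{k−1} − α_k)/(α_k − α))]‖z^k‖². Then for every k ≥ 2 it holds ψ_{k+1} ≤ ψ_k − c₁^k ‖x^k − x^{k+1}‖² − (β_k/2)‖y^k − y^{k+1}‖² − c₃^k ‖z^{k+1} − z^k‖² + ω_k, where c₁^k = (1/2)(2ρ_k − ℓ − 2σ_A(1/(2(α_{k−1} − α)) + 2α/(α_k − α)²)) and c₃^k = α(1 − 2α(α_k − α_{k+1})/((α_{k+1} − α)(α_k − α))). -/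
/-!
Each update of the iteration yields one inequality. The projection step, through the variational
inequality of the projection onto `S` and the descent lemma for the `ℓ`-smooth `φ`, lowers
`φ + ⟪z^k, A ·⟫ - ⟪K ·, y^k⟫` by `(ρ_k - ℓ/2)‖x^k - x^{k+1}‖²`; the `y`-update is compared with
its previous iterate; and the two consecutive `z`-updates are subgradient inequalities for `G`
at `z^k` and at `z^{k+1}`. The first three together bound `Ψ_{k+1} - Ψ_k` up to the cross terms
`⟪Δz, A Δx⟫` and `⟪Δz, z^k - z^{k-1}⟫`, where `Δ` is the forward difference at `k`. Subtracting the
two subgradient inequalities controls `α_k ‖Δz‖²` by the same cross terms; adding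
`4α/(α_k - α)` times this control and applying Young's inequality to the cross terms produces
exactly the squared norms that the correction terms of `ψ_k` and `ω_k` are built to absorb.
-/

open RealInnerProductSpace Filter Topology

namespace EReal

theorem ne_top_of_add_coe_le {a b : EReal} {r s : ℝ} (hb : b ≠ ⊤) (h : a + r ≤ b + s) :
    a ≠ ⊤ := by
  rintro rfl
  exact (add_lt_top hb (coe_ne_top s)).ne (top_le_iff.mp (by simpa using h))

theorem toReal_add_le_toReal_add {a b : EReal} {r s : ℝ} (ha : a ≠ ⊥) (hb : b ≠ ⊥) (hb' : b ≠ ⊤)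
    (h : a + r ≤ b + s) : a.toReal + r ≤ b.toReal + s := by
  lift a to ℝ using ⟨ne_top_of_add_coe_le hb' h, ha⟩
  lift b to ℝ using ⟨hb', hb⟩
  exact_mod_cast h

end EReal

theorem le_of_forall_mem_Ioo_le_add_mul {a b C : ℝ}
    (h : ∀ t ∈ Set.Ioo (0 : ℝ) 1, a ≤ b + t * C) : a ≤ b := by
  have hlim : Tendsto (fun t : ℝ => b + t * C) (𝓝[>] 0) (𝓝 b) := by
    have : Continuous fun t : ℝ => b + t * C := by fun_prop
    simpa using (this.tendsto 0).mono_left nhdsWithin_le_nhds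
  exact ge_of_tendsto hlim (mem_of_superset (Ioo_mem_nhdsGT one_pos) h)

theorem mul_le_sq_div_add_mul_sq (a b : ℝ) {t : ℝ} (ht : 0 < t) :
    a * b ≤ a ^ 2 / (2 * t) + t / 2 * b ^ 2 := by
  have : a ^ 2 / (2 * t) + t / 2 * b ^ 2 - a * b = (a - t * b) ^ 2 / (2 * t) := by
    field_simp; ring
  nlinarith [div_nonneg (sq_nonneg (a - t * b)) (by positivity : (0 : ℝ) ≤ 2 * t)]

section InnerProductSpace

variable {E : Type*} [NormedAddCommGroup E] [InnerProductSpace ℝ E]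

theorem real_inner_sub_le_zero_of_forall_norm_sub_le {S : Set E} (hS : Convex ℝ S) {u p : E}
    (hp : p ∈ S) (hmin : ∀ v ∈ S, ‖p - u‖ ≤ ‖v - u‖) : ∀ w ∈ S, ⟪u - p, w - p⟫ ≤ 0 := by
  have : Nonempty S := ⟨⟨p, hp⟩⟩
  refine (norm_eq_iInf_iff_real_inner_le_zero hS hp).mp (le_antisymm ?_ ?_)
  · exact le_ciInf fun w => by simpa only [norm_sub_rev u] using hmin w w.2
  · exact ciInf_le ⟨0, Set.forall_mem_range.mpr fun _ => norm_nonneg _⟩ (⟨p, hp⟩ : S)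

theorem toReal_add_inner_le_of_prox_minimizer {G : E → EReal} (hbot : ∀ v, G v ≠ ⊥)
    (hconv : ∀ v w : E, ∀ a b : ℝ, 0 ≤ a → 0 ≤ b → a + b = 1 →
      G (a • v + b • w) ≤ (a : EReal) * G v + (b : EReal) * G w)
    {b c m : E} {τ : ℝ}
    (hmin : ∀ v, G m + ((-⟪b, m⟫ + τ / 2 * ‖m - c‖ ^ 2 : ℝ) : EReal) ≤
      G v + ((-⟪b, v⟫ + τ / 2 * ‖v - c‖ ^ 2 : ℝ) : EReal))
    {w : E} (hw : G w ≠ ⊤) :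
    (G m).toReal + ⟪b - τ • (m - c), w - m⟫ ≤ (G w).toReal := by
  have hm : G m ≠ ⊤ := EReal.ne_top_of_add_coe_le hw (hmin w)
  refine le_of_forall_mem_Ioo_le_add_mul (C := τ / 2 * ‖w - m‖ ^ 2) fun t ⟨ht0, ht1⟩ => ?_
  set u := (1 - t) • m + t • w
  have hGu : G u ≤ (((1 - t) * (G m).toReal + t * (G w).toReal : ℝ) : EReal) := by
    have := hconv m w (1 - t) t (by linarith) ht0.le (by ring)
    rwa [← EReal.coe_toReal hm (hbot m), ← EReal.coe_toReal hw (hbot w)] at this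
  have hu : G u ≠ ⊤ := ne_top_of_le_ne_top (EReal.coe_ne_top _) hGu
  have hGu' : (G u).toReal ≤ (1 - t) * (G m).toReal + t * (G w).toReal := by
    rwa [← EReal.coe_toReal hu (hbot u), EReal.coe_le_coe_iff] at hGu
  have hmin_u := EReal.toReal_add_le_toReal_add (hbot m) (hbot u) hu (hmin u)
  have hq : -⟪b, u⟫ + τ / 2 * ‖u - c‖ ^ 2 = -⟪b, m⟫ + τ / 2 * ‖m - c‖ ^ 2 -
      t * ⟪b - τ • (m - c), w - m⟫ + t ^ 2 * (τ / 2 * ‖w - m‖ ^ 2) := by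
    rw [show u - c = (m - c) + t • (w - m) by simp only [u]; module,
      show u = m + t • (w - m) by simp only [u]; module,
      norm_add_sq_real, norm_smul, Real.norm_eq_abs, abs_of_pos ht0]
    simp only [inner_add_right, inner_sub_left, real_inner_smul_right, real_inner_smul_left]
    ring
  rw [hq] at hmin_u
  have : t * ((G m).toReal + ⟪b - τ • (m - c), w - m⟫) ≤
      t * ((G w).toReal + t * (τ / 2 * ‖w - m‖ ^ 2)) := by linarith
  exact le_of_mul_le_mul_left this ht0

variable [CompleteSpace E]

theorem le_add_inner_add_sq_of_lipschitz_gradient {φ : E → ℝ} {gφ : E → E} {ℓ : ℝ}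
    (hφ : ∀ u, HasGradientAt φ (gφ u) u) (hlip : ∀ u v, ‖gφ u - gφ v‖ ≤ ℓ * ‖u - v‖)
    (u v : E) : φ v ≤ φ u + ⟪gφ u, v - u⟫ + ℓ / 2 * ‖v - u‖ ^ 2 := by
  set d := v - u
  let F : ℝ → ℝ := fun t => φ (u + t • d) - t * ⟪gφ u, d⟫ - t ^ 2 * (ℓ / 2 * ‖d‖ ^ 2)
  let F' : ℝ → ℝ := fun t => ⟪gφ (u + t • d) - gφ u, d⟫ - t * (ℓ * ‖d‖ ^ 2)
  have hF : ∀ t, HasDerivAt F (F' t) t := by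
    intro t
    have hline : HasDerivAt (fun t : ℝ => u + t • d) d t := by
      simpa using ((hasDerivAt_id t).smul_const d).const_add u
    have hφt : HasDerivAt (fun t : ℝ => φ (u + t • d)) ⟪gφ (u + t • d), d⟫ t := by
      simpa [Function.comp_def] using (hφ (u + t • d)).hasFDerivAt.comp_hasDerivAt t hline
    refine ((hφt.sub ((hasDerivAt_id t).mul_const ⟪gφ u, d⟫)).sub
      ((hasDerivAt_pow 2 t).mul_const (ℓ / 2 * ‖d‖ ^ 2))).congr_deriv ?_
    simp only [F', inner_sub_left, Nat.cast_ofNat]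
    ring
  have hF'_nonpos : ∀ t, 0 ≤ t → F' t ≤ 0 := by
    intro t ht
    have hgrad : ‖gφ (u + t • d) - gφ u‖ ≤ ℓ * (t * ‖d‖) := by
      simpa [norm_smul, abs_of_nonneg ht] using hlip (u + t • d) u
    calc F' t ≤ ‖gφ (u + t • d) - gφ u‖ * ‖d‖ - t * (ℓ * ‖d‖ ^ 2) :=
          sub_le_sub_right (real_inner_le_norm _ _) _
      _ ≤ ℓ * (t * ‖d‖) * ‖d‖ - t * (ℓ * ‖d‖ ^ 2) := by gcongr
      _ = 0 := by ring
  have hanti : AntitoneOn F (Set.Icc 0 1) :=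
    antitoneOn_of_hasDerivWithinAt_nonpos (convex_Icc 0 1)
      (fun t _ => (hF t).continuousAt.continuousWithinAt)
      (fun t _ => (hF t).hasDerivWithinAt)
      (fun t ht => hF'_nonpos t (interior_subset ht).1)
  have h := hanti (by simp) (by simp) zero_le_one
  simp [F, d] at h
  linarith

theorem projected_gradient_step_descent {S : Set E} (hS : Convex ℝ S) {φ : E → ℝ} {gφ : E → E}
    {ℓ ρ : ℝ} (hφ : ∀ u, HasGradientAt φ (gφ u) u)
    (hlip : ∀ u v, ‖gφ u - gφ v‖ ≤ ℓ * ‖u - v‖) (hρ : ℓ / 2 < ρ) {x x' w : E}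
    (hx : x ∈ S) (hx' : x' ∈ S)
    (hmin : ∀ v ∈ S, ‖x' - (x - ρ⁻¹ • (w + gφ x))‖ ≤ ‖v - (x - ρ⁻¹ • (w + gφ x))‖) :
    φ x' + ⟪w, x' - x⟫ ≤ φ x - (ρ - ℓ / 2) * ‖x - x'‖ ^ 2 := by
  rcases eq_or_ne x' x with rfl | hne
  · simp
  have hρ0 : 0 < ρ := by
    have := hlip x' x
    have : 0 < ‖x' - x‖ := norm_pos_iff.mpr (sub_ne_zero.mpr hne)
    nlinarith [norm_nonneg (gφ x' - gφ x)]
  have hproj : ρ * ‖x - x'‖ ^ 2 ≤ ⟪w + gφ x, x - x'⟫ := by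
    have hvar := real_inner_sub_le_zero_of_forall_norm_sub_le hS hx' hmin x hx
    rw [show x - ρ⁻¹ • (w + gφ x) - x' = (x - x') - ρ⁻¹ • (w + gφ x) by abel, inner_sub_left,
      real_inner_smul_left, real_inner_self_eq_norm_sq, sub_nonpos] at hvar
    exact (le_inv_mul_iff₀ hρ0).mp hvar
  have hdesc := le_add_inner_add_sq_of_lipschitz_gradient hφ hlip x x'
  simp only [← neg_sub x x', inner_neg_right, norm_neg] at hdesc ⊢
  rw [inner_add_left] at hproj
  linarith

end InnerProductSpace

-- Subscript `i` refers to iteration `k - 2 + i`; `I`, `J`, `L` stand for `⟪Δz, A Δx⟫`,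
-- `⟪z₂, Δz⟫`, `⟪z₂ - z₁, Δz⟫`, where `Δz = z₃ - z₂` and `Δx = x₃ - x₂`.
theorem energy_descent_of_step_bounds {α a₀ a₁ a₂ a₃ ρ ℓ β nA Ψ₂ Ψ₃ X Y Z P I J L N₂ N₃ : ℝ}
    (hα : 0 < α) (ha₂ : α < a₂) (ha₃ : α < a₃) (ha₁₂ : a₂ ≤ a₁)
    (hΨ : Ψ₃ - Ψ₂ ≤ -(ρ - ℓ / 2) * X ^ 2 - β / 2 * Y ^ 2 + I + (a₁ - α) * J + α * L)
    (hz : a₂ * Z ^ 2 ≤ I + (a₁ - a₂) * J + α * L)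
    (hI : I ≤ nA * X * Z) (hL : L ≤ Z * P) (hN : N₃ = N₂ + 2 * J + Z ^ 2) :
    Ψ₃ + (α * (1 / 2 + 2 * α / (a₃ - α)) * Z ^ 2 -
        ((1 / 2) * (a₁ - α) - 2 * α * (a₂ - a₁) / (a₂ - α)) * N₃) ≤
      Ψ₂ + (α * (1 / 2 + 2 * α / (a₂ - α)) * P ^ 2 -
        ((1 / 2) * (a₀ - α) - 2 * α * (a₁ - a₀) / (a₁ - α)) * N₂) +
      (-((1 / 2) * (2 * ρ - ℓ - 2 * nA ^ 2 *
            (1 / (2 * (a₁ - α)) + 2 * α / (a₂ - α) ^ 2))) * X ^ 2 -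
        (β / 2) * Y ^ 2 -
        (α * (1 - 2 * α * (a₂ - a₃) / ((a₃ - α) * (a₂ - α)))) * Z ^ 2 +
        ((1 / 2) * (a₀ - a₁) + 2 * α * ((a₀ - a₁) / (a₁ - α) - (a₁ - a₂) / (a₂ - α))) * N₂) := by
  obtain ⟨d, hd, rfl⟩ : ∃ d, 0 < d ∧ a₂ = α + d := ⟨a₂ - α, by linarith, by ring⟩
  obtain ⟨e, he, rfl⟩ : ∃ e, 0 ≤ e ∧ a₁ = α + d + e := ⟨a₁ - α - d, by linarith, by ring⟩
  obtain ⟨f, hf, rfl⟩ : ∃ f, 0 < f ∧ a₃ = α + f := ⟨a₃ - α, by linarith, by ring⟩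
  have hI₁ := hI.trans (mul_le_sq_div_add_mul_sq (nA * X) Z (by positivity : 0 < d + e))
  have hI₂ := hI.trans (mul_le_sq_div_add_mul_sq (nA * X) Z hd)
  have hL₂ : L ≤ Z ^ 2 / 2 + P ^ 2 / 2 := hL.trans (by nlinarith [sq_nonneg (Z - P)])
  linear_combination (norm := skip) hΨ + 4 * α / d * hz + hI₁ + 4 * α / d * hI₂
    + (α + 4 * α ^ 2 / d) * hL₂ + 2 * α * e / d * sq_nonneg Z - ((d + e) / 2 + 2 * α * e / d) * hN
  apply le_of_eq
  ring_nf
  field_simp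
  ring

section PrimalDual

variable {E F V : Type*} [NormedAddCommGroup E] [InnerProductSpace ℝ E] [CompleteSpace E]
  [NormedAddCommGroup F] [InnerProductSpace ℝ F] [CompleteSpace F]
  [NormedAddCommGroup V] [InnerProductSpace ℝ V] [CompleteSpace V]

theorem primal_dual_energy_descent (A : E →L[ℝ] V) (K : E →L[ℝ] F) (φ : E → ℝ)
    {α a₀ a₁ a₂ a₃ δ₁ δ₂ ρ ℓ β g₂ g₃ h₂ h₃ : ℝ} {x₂ x₃ : E} {y₂ y₃ : F} {z₁ z₂ z₃ : V}
    (hα : 0 < α) (ha₂ : α < a₂) (ha₃ : α < a₃) (ha₁₂ : a₂ ≤ a₁)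
    (hδ₁ : a₁ * δ₁ = α) (hδ₂ : a₂ * δ₂ = α)
    (hx : φ x₃ + ⟪A.adjoint z₂ - K.adjoint y₂, x₃ - x₂⟫ ≤ φ x₂ - (ρ - ℓ / 2) * ‖x₂ - x₃‖ ^ 2)
    (hy : h₃ + (-⟪K x₃, y₃⟫ + β / 2 * ‖y₃ - y₂‖ ^ 2) ≤ h₂ + (-⟪K x₃, y₂⟫ + β / 2 * ‖y₂ - y₂‖ ^ 2))
    (hz₂ : g₂ + ⟪A x₂ - a₁ • (z₂ - δ₁ • z₁), z₃ - z₂⟫ ≤ g₃)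
    (hz₃ : g₃ + ⟪A x₃ - a₂ • (z₃ - δ₂ • z₂), z₂ - z₃⟫ ≤ g₂) :
    ⟪z₃, A x₃⟫ - g₃ + (φ x₃ - ⟪K x₃, y₃⟫) + h₃ +
        (α * (1 / 2 + 2 * α / (a₃ - α)) * ‖z₃ - z₂‖ ^ 2 -
          ((1 / 2) * (a₁ - α) - 2 * α * (a₂ - a₁) / (a₂ - α)) * ‖z₃‖ ^ 2) ≤
      ⟪z₂, A x₂⟫ - g₂ + (φ x₂ - ⟪K x₂, y₂⟫) + h₂ +
        (α * (1 / 2 + 2 * α / (a₂ - α)) * ‖z₂ - z₁‖ ^ 2 -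
          ((1 / 2) * (a₀ - α) - 2 * α * (a₁ - a₀) / (a₁ - α)) * ‖z₂‖ ^ 2) +
      (-((1 / 2) * (2 * ρ - ℓ - 2 * ‖A‖ ^ 2 *
            (1 / (2 * (a₁ - α)) + 2 * α / (a₂ - α) ^ 2))) * ‖x₂ - x₃‖ ^ 2 -
        (β / 2) * ‖y₂ - y₃‖ ^ 2 -
        (α * (1 - 2 * α * (a₂ - a₃) / ((a₃ - α) * (a₂ - α)))) * ‖z₃ - z₂‖ ^ 2 +
        ((1 / 2) * (a₀ - a₁) + 2 * α * ((a₀ - a₁) / (a₁ - α) - (a₁ - a₂) / (a₂ - α))) *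
          ‖z₂‖ ^ 2) := by
  have hI : ⟪z₃ - z₂, A x₃ - A x₂⟫ ≤ ‖A‖ * ‖x₂ - x₃‖ * ‖z₃ - z₂‖ := by
    calc ⟪z₃ - z₂, A x₃ - A x₂⟫ ≤ ‖z₃ - z₂‖ * ‖A (x₃ - x₂)‖ := by
          rw [map_sub]; exact real_inner_le_norm _ _
      _ ≤ ‖z₃ - z₂‖ * (‖A‖ * ‖x₂ - x₃‖) := by
          rw [norm_sub_rev x₂]; gcongr; exact A.le_opNorm _
      _ = _ := by ring
  have hL : ⟪z₂ - z₁, z₃ - z₂⟫ ≤ ‖z₃ - z₂‖ * ‖z₂ - z₁‖ := by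
    rw [mul_comm]; exact real_inner_le_norm _ _
  have hN : ‖z₃‖ ^ 2 = ‖z₂‖ ^ 2 + 2 * ⟪z₂, z₃ - z₂⟫ + ‖z₃ - z₂‖ ^ 2 := by
    rw [← norm_add_sq_real, add_sub_cancel]
  rw [smul_sub, smul_smul, hδ₁] at hz₂
  rw [smul_sub, smul_smul, hδ₂] at hz₃
  refine energy_descent_of_step_bounds hα ha₂ ha₃ ha₁₂ ?_ ?_ hI hL hN
  all_goals
    simp only [inner_sub_left, inner_sub_right, real_inner_smul_right,
      ContinuousLinearMap.adjoint_inner_left, ← real_inner_self_eq_norm_sq, real_inner_comm]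
      at hx hy hz₂ hz₃ ⊢
    linarith

end PrimalDual

theorem stmt_3_general (n s p : ℕ)
    (S : Set (EuclideanSpace ℝ (Fin n)))
    (hSconv : Convex ℝ S)
    (φ : EuclideanSpace ℝ (Fin n) → ℝ)
    (gφ : EuclideanSpace ℝ (Fin n) → EuclideanSpace ℝ (Fin n))
    (ℓ : ℝ)
    (hφ : ∀ u, HasGradientAt φ (gφ u) u)
    (hφlip : ∀ u v, ‖gφ u - gφ v‖ ≤ ℓ * ‖u - v‖)
    (A : EuclideanSpace ℝ (Fin n) →L[ℝ] EuclideanSpace ℝ (Fin s))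
    (K : EuclideanSpace ℝ (Fin n) →L[ℝ] EuclideanSpace ℝ (Fin p))
    (G : EuclideanSpace ℝ (Fin s) → EReal)
    (hGproper₁ : ∀ v, G v ≠ ⊥) (hGproper₂ : ∃ v, G v ≠ ⊤)
    (hGconv : ∀ v w : EuclideanSpace ℝ (Fin s), ∀ a b : ℝ, 0 ≤ a → 0 ≤ b → a + b = 1 →
      G (a • v + b • w) ≤ (a : EReal) * G v + (b : EReal) * G w)
    (H : EuclideanSpace ℝ (Fin p) → EReal)
    (hHproper₁ : ∀ v, H v ≠ ⊥) (hHproper₂ : ∃ v, H v ≠ ⊤)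
    (α β ρ δ : ℕ → ℝ) (αl : ℝ) (hαl : 0 < αl)
    (hα : ∀ k, α (k + 1) ≤ α k ∧ αl < α (k + 1))
    (hδ : ∀ k, δ k = αl / α k)
    (hρ : ∀ k, ℓ / 2 < ρ k)
    (x : ℕ → EuclideanSpace ℝ (Fin n))
    (y : ℕ → EuclideanSpace ℝ (Fin p))
    (z : ℕ → EuclideanSpace ℝ (Fin s))
    (hxS : ∀ k, x (k + 1) ∈ S)
    (hxmin : ∀ k, ∀ v ∈ S,
      ‖x (k + 1) - (x k - (ρ k)⁻¹ •
        (ContinuousLinearMap.adjoint A (z k) - ContinuousLinearMap.adjoint K (y k) + gφ (x k)))‖ ≤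
      ‖v - (x k - (ρ k)⁻¹ •
        (ContinuousLinearMap.adjoint A (z k) - ContinuousLinearMap.adjoint K (y k) + gφ (x k)))‖)
    (hymin : ∀ k, ∀ w : EuclideanSpace ℝ (Fin p),
      H (y (k + 1)) + ((-⟪K (x (k + 1)), y (k + 1)⟫ + β k / 2 * ‖y (k + 1) - y k‖ ^ 2 : ℝ) : EReal) ≤
      H w + ((-⟪K (x (k + 1)), w⟫ + β k / 2 * ‖w - y k‖ ^ 2 : ℝ) : EReal))
    (hzmin : ∀ k, ∀ w : EuclideanSpace ℝ (Fin s),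
      G (z (k + 1)) + ((-⟪A (x (k + 1)), z (k + 1)⟫ + α k / 2 * ‖z (k + 1) - δ k • z k‖ ^ 2 : ℝ) : EReal) ≤
      G w + ((-⟪A (x (k + 1)), w⟫ + α k / 2 * ‖w - δ k • z k‖ ^ 2 : ℝ) : EReal))
    (ψ : ℕ → EReal)
    (hψ : ∀ k, 2 ≤ k → ψ k =
      ((⟪z k, A (x k)⟫ : ℝ) : EReal) - G (z k) + ((φ (x k) - ⟪K (x k), y k⟫ : ℝ) : EReal) + H (y k) +
      ((αl * (1 / 2 + 2 * αl / (α k - αl)) * ‖z k - z (k - 1)‖ ^ 2 -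
        ((1 / 2) * (α (k - 2) - αl) - 2 * αl * (α (k - 1) - α (k - 2)) / (α (k - 1) - αl)) *
          ‖z k‖ ^ 2 : ℝ) : EReal))
    (ω : ℕ → ℝ)
    (hω : ∀ k, 2 ≤ k → ω k =
      ((1 / 2) * (α (k - 2) - α (k - 1)) +
        2 * αl * ((α (k - 2) - α (k - 1)) / (α (k - 1) - αl) -
          (α (k - 1) - α k) / (α k - αl))) * ‖z k‖ ^ 2) :
    ∀ k, 2 ≤ k → ψ (k + 1) ≤ ψ k +
      ((-((1 / 2) * (2 * ρ k - ℓ - 2 * ‖A‖ ^ 2 *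
            (1 / (2 * (α (k - 1) - αl)) + 2 * αl / (α k - αl) ^ 2))) * ‖x k - x (k + 1)‖ ^ 2 -
        (β k / 2) * ‖y k - y (k + 1)‖ ^ 2 -
        (αl * (1 - 2 * αl * (α k - α (k + 1)) / ((α (k + 1) - αl) * (α k - αl)))) *
          ‖z (k + 1) - z k‖ ^ 2 + ω k : ℝ) : EReal) := by
  intro k hk
  obtain ⟨m, rfl⟩ : ∃ m, k = m + 1 := ⟨k - 1, by omega⟩
  obtain ⟨hα₁₂, hαl₂⟩ := hα m
  obtain ⟨-, hαl₃⟩ := hα (m + 1)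
  have hδ' : ∀ j, αl < α j → α j * δ j = αl := fun j hj => by
    rw [hδ, mul_div_cancel₀ _ (by linarith)]
  obtain ⟨vG, hvG⟩ := hGproper₂
  obtain ⟨vH, hvH⟩ := hHproper₂
  have hG₂ := EReal.ne_top_of_add_coe_le hvG (hzmin m vG)
  have hG₃ := EReal.ne_top_of_add_coe_le hvG (hzmin (m + 1) vG)
  have hH₂ := EReal.ne_top_of_add_coe_le hvH (hymin m vH)
  have hH₃ := EReal.ne_top_of_add_coe_le hvH (hymin (m + 1) vH)
  have hx := projected_gradient_step_descent hSconv hφ hφlip (hρ (m + 1)) (hxS m) (hxS (m + 1))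
    (hxmin (m + 1))
  have hy := EReal.toReal_add_le_toReal_add (hHproper₁ _) (hHproper₁ _) hH₂
    (hymin (m + 1) (y (m + 1)))
  have hz₂ := toReal_add_inner_le_of_prox_minimizer hGproper₁ hGconv (hzmin m) hG₃
  have hz₃ := toReal_add_inner_le_of_prox_minimizer hGproper₁ hGconv (hzmin (m + 1)) hG₂
  rw [hψ _ (by omega), hψ _ hk, hω _ hk, ← EReal.coe_toReal hG₂ (hGproper₁ _),
    ← EReal.coe_toReal hG₃ (hGproper₁ _), ← EReal.coe_toReal hH₂ (hHproper₁ _),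
    ← EReal.coe_toReal hH₃ (hHproper₁ _)]
  norm_cast
  exact primal_dual_energy_descent A K φ hαl hαl₂ hαl₃ hα₁₂ (hδ' m (hαl₂.trans_le hα₁₂))
    (hδ' (m + 1) hαl₂) hx hy hz₂ hz₃

/-- (Descent inequality for the DPFS iteration, Theorem 4.1 of the paper.)
With `G`, `H` proper convex lsc (playing the roles of `g*`, `f*`), step sizes
`α_k ≥ α_{k+1} > α > 0`, `δ_k = α/α_k`, `β_k > 0`, `ρ_k > ℓ/2`, and iterates generated by
the projection/proximal updates, the discrete energy `ψ_k` satisfies for all `k ≥ 2` the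
inequality `ψ_{k+1} ≤ ψ_k − c₁^k‖x^k − x^{k+1}‖² − (β_k/2)‖y^k − y^{k+1}‖²
− c₃^k‖z^{k+1} − z^k‖² + ω_k`. -/
theorem stmt_3 (n s p : ℕ)
    (S : Set (EuclideanSpace ℝ (Fin n)))
    (hSne : S.Nonempty) (hSconv : Convex ℝ S) (hScomp : IsCompact S)
    (φ : EuclideanSpace ℝ (Fin n) → ℝ)
    (gφ : EuclideanSpace ℝ (Fin n) → EuclideanSpace ℝ (Fin n))
    (ℓ : ℝ)
    (hφ : ∀ u, HasGradientAt φ (gφ u) u)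
    (hφlip : ∀ u v, ‖gφ u - gφ v‖ ≤ ℓ * ‖u - v‖)
    (A : EuclideanSpace ℝ (Fin n) →L[ℝ] EuclideanSpace ℝ (Fin s))
    (K : EuclideanSpace ℝ (Fin n) →L[ℝ] EuclideanSpace ℝ (Fin p))
    (G : EuclideanSpace ℝ (Fin s) → EReal)
    (hGproper₁ : ∀ v, G v ≠ ⊥) (hGproper₂ : ∃ v, G v ≠ ⊤)
    (hGconv : ∀ v w : EuclideanSpace ℝ (Fin s), ∀ a b : ℝ, 0 ≤ a → 0 ≤ b → a + b = 1 →
      G (a • v + b • w) ≤ (a : EReal) * G v + (b : EReal) * G w)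
    (hGlsc : LowerSemicontinuous G)
    (H : EuclideanSpace ℝ (Fin p) → EReal)
    (hHproper₁ : ∀ v, H v ≠ ⊥) (hHproper₂ : ∃ v, H v ≠ ⊤)
    (hHconv : ∀ v w : EuclideanSpace ℝ (Fin p), ∀ a b : ℝ, 0 ≤ a → 0 ≤ b → a + b = 1 →
      H (a • v + b • w) ≤ (a : EReal) * H v + (b : EReal) * H w)
    (hHlsc : LowerSemicontinuous H)
    (α β ρ δ : ℕ → ℝ) (αl : ℝ) (hαl : 0 < αl)
    (hα : ∀ k, α (k + 1) ≤ α k ∧ αl < α (k + 1))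
    (hα0 : αl < α 0)
    (hδ : ∀ k, δ k = αl / α k)
    (hβ : ∀ k, 0 < β k)
    (hρ : ∀ k, ℓ / 2 < ρ k)
    (x : ℕ → EuclideanSpace ℝ (Fin n))
    (y : ℕ → EuclideanSpace ℝ (Fin p))
    (z : ℕ → EuclideanSpace ℝ (Fin s))
    (hx0 : x 0 ∈ S)
    (hxS : ∀ k, x (k + 1) ∈ S)
    (hxmin : ∀ k, ∀ v ∈ S,
      ‖x (k + 1) - (x k - (ρ k)⁻¹ •
        (ContinuousLinearMap.adjoint A (z k) - ContinuousLinearMap.adjoint K (y k) + gφ (x k)))‖ ≤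
      ‖v - (x k - (ρ k)⁻¹ •
        (ContinuousLinearMap.adjoint A (z k) - ContinuousLinearMap.adjoint K (y k) + gφ (x k)))‖)
    (hymin : ∀ k, ∀ w : EuclideanSpace ℝ (Fin p),
      H (y (k + 1)) + ((-⟪K (x (k + 1)), y (k + 1)⟫ + β k / 2 * ‖y (k + 1) - y k‖ ^ 2 : ℝ) : EReal) ≤
      H w + ((-⟪K (x (k + 1)), w⟫ + β k / 2 * ‖w - y k‖ ^ 2 : ℝ) : EReal))
    (hzmin : ∀ k, ∀ w : EuclideanSpace ℝ (Fin s),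
      G (z (k + 1)) + ((-⟪A (x (k + 1)), z (k + 1)⟫ + α k / 2 * ‖z (k + 1) - δ k • z k‖ ^ 2 : ℝ) : EReal) ≤
      G w + ((-⟪A (x (k + 1)), w⟫ + α k / 2 * ‖w - δ k • z k‖ ^ 2 : ℝ) : EReal))
    (ψ : ℕ → EReal)
    (hψ : ∀ k, 2 ≤ k → ψ k =
      ((⟪z k, A (x k)⟫ : ℝ) : EReal) - G (z k) + ((φ (x k) - ⟪K (x k), y k⟫ : ℝ) : EReal) + H (y k) +
      ((αl * (1 / 2 + 2 * αl / (α k - αl)) * ‖z k - z (k - 1)‖ ^ 2 -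
        ((1 / 2) * (α (k - 2) - αl) - 2 * αl * (α (k - 1) - α (k - 2)) / (α (k - 1) - αl)) *
          ‖z k‖ ^ 2 : ℝ) : EReal))
    (ω : ℕ → ℝ)
    (hω : ∀ k, 2 ≤ k → ω k =
      ((1 / 2) * (α (k - 2) - α (k - 1)) +
        2 * αl * ((α (k - 2) - α (k - 1)) / (α (k - 1) - αl) -
          (α (k - 1) - α k) / (α k - αl))) * ‖z k‖ ^ 2) :
    ∀ k, 2 ≤ k → ψ (k + 1) ≤ ψ k +
      ((-((1 / 2) * (2 * ρ k - ℓ - 2 * ‖A‖ ^ 2 *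
            (1 / (2 * (α (k - 1) - αl)) + 2 * αl / (α k - αl) ^ 2))) * ‖x k - x (k + 1)‖ ^ 2 -
        (β k / 2) * ‖y k - y (k + 1)‖ ^ 2 -
        (αl * (1 - 2 * αl * (α k - α (k + 1)) / ((α (k + 1) - αl) * (α k - αl)))) *
          ‖z (k + 1) - z k‖ ^ 2 + ω k : ℝ) : EReal) :=
  stmt_3_general n s p S hSconv φ gφ ℓ hφ hφlip A K G hGproper₁ hGproper₂ hGconv H hHproper₁
    hHproper₂ α β ρ δ αl hαl hα hδ hρ x y z hxS hxmin hymin hzmin ψ hψ ω hω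
end

section
/- Let α > 0 and let (α_k)_{k≥0} be a nonincreasing sequence of reals with α_k > α for all k ≥ 0 and (α_k − α)(α_{k+2} − α) ≥ (α_{k+1} − α)² for all k ≥ 0. Let ℓ ≥ 0 and let (z^k)_{k≥0} be a sequence in ℝ^s with ‖z^k‖ ≤ ℓ for all k. For k ≥ 2 define ω_k := [(1/2)(α_{k−2} − α_{k−1}) + 2α((α_{k−2} − α_{k−1})/(α_{k−1} − α) − (α_{k−1} − α_k)/(α_k − α))]‖z^k‖². Then ω_k ≥ 0 for all k ≥ 2, and for every N ≥ 2 it holds ∑_{k=2}^N ω_k ≤ ((1/2)α_0 + 2α(α_0 − α_1)/(α_1 − α))ℓ²; in particular the series ∑_{k≥2} ω_k converges and ω_k → 0 as k → +∞. -/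
/-!
The coefficient of `‖z^(k+2)‖²` in `ω (k+2)` is the decrement `g k - g (k+1)` of the potential
`g k := a k / 2 + 2α c k`, where `c k := (a k - a (k+1)) / (a (k+1) - α)`. Since
`c k = (a k - α) / (a (k+1) - α) - 1`, log-convexity of `a - α` makes `c` nonincreasing, so `g` is
nonnegative and nonincreasing and the partial sums telescope to at most `g 0 ℓ²`.
-/

open Filter Finset

lemma antitone_div_succ_of_sq_le_mul {b : ℕ → ℝ} (hpos : ∀ k, 0 < b k)
    (hlog : ∀ k, b (k + 1) ^ 2 ≤ b k * b (k + 2)) : Antitone fun k => b k / b (k + 1) := by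
  refine antitone_nat_of_succ_le fun k => ?_
  rw [div_le_div_iff₀ (hpos _) (hpos _)]
  simpa [sq] using hlog k

lemma sum_range_sub_succ_mul_le {g x : ℕ → ℝ} {L : ℝ} (hg : Antitone g) (hg0 : ∀ k, 0 ≤ g k)
    (hL : 0 ≤ L) (hx : ∀ k, x k ≤ L) (n : ℕ) :
    ∑ i ∈ range n, (g i - g (i + 1)) * x i ≤ g 0 * L :=
  calc ∑ i ∈ range n, (g i - g (i + 1)) * x i
      ≤ ∑ i ∈ range n, (g i - g (i + 1)) * L :=
        sum_le_sum fun i _ => mul_le_mul_of_nonneg_left (hx i) (sub_nonneg.2 (hg i.le_succ))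
    _ = (g 0 - g n) * L := by rw [← sum_mul, sum_range_sub']
    _ ≤ g 0 * L := mul_le_mul_of_nonneg_right (sub_le_self _ (hg0 n)) hL

section Potential

variable {α : ℝ} {a : ℕ → ℝ}

noncomputable def potential (α : ℝ) (a : ℕ → ℝ) (k : ℕ) : ℝ :=
  a k / 2 + 2 * α * ((a k - a (k + 1)) / (a (k + 1) - α))

lemma potential_nonneg (hα : 0 ≤ α) (hmono : ∀ k, a (k + 1) ≤ a k) (hgt : ∀ k, α < a k)
    (k : ℕ) : 0 ≤ potential α a k := by
  have : 0 ≤ (a k - a (k + 1)) / (a (k + 1) - α) :=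
    div_nonneg (sub_nonneg.2 (hmono k)) (sub_pos.2 (hgt _)).le
  unfold potential
  nlinarith [hgt k]

lemma antitone_potential (hα : 0 ≤ α) (hmono : ∀ k, a (k + 1) ≤ a k) (hgt : ∀ k, α < a k)
    (hlog : ∀ k, (a k - α) * (a (k + 2) - α) ≥ (a (k + 1) - α) ^ 2) :
    Antitone (potential α a) := by
  have hpos : ∀ k, 0 < a k - α := fun k => sub_pos.2 (hgt k)
  have hratio := antitone_div_succ_of_sq_le_mul hpos hlog
  have hc : ∀ k, (a k - a (k + 1)) / (a (k + 1) - α) = (a k - α) / (a (k + 1) - α) - 1 :=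
    fun k => by field_simp [(hpos (k + 1)).ne']; ring
  refine antitone_nat_of_succ_le fun k => ?_
  have := hratio k.le_succ
  simp only [potential, hc] at this ⊢
  nlinarith [hmono k]

end Potential

theorem stmt_7_general (s : ℕ) (α ℓ : ℝ) (hα : 0 < α)
    (a : ℕ → ℝ) (hmono : ∀ k, a (k + 1) ≤ a k) (hgt : ∀ k, α < a k)
    (hlog : ∀ k, (a k - α) * (a (k + 2) - α) ≥ (a (k + 1) - α) ^ 2)
    (z : ℕ → EuclideanSpace ℝ (Fin s)) (hz : ∀ k, ‖z k‖ ≤ ℓ)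
    (ω : ℕ → ℝ)
    (hω : ∀ k, 2 ≤ k → ω k =
      ((1 / 2) * (a (k - 2) - a (k - 1)) +
        2 * α * ((a (k - 2) - a (k - 1)) / (a (k - 1) - α) -
          (a (k - 1) - a k) / (a k - α))) * ‖z k‖ ^ 2) :
    (∀ k, 2 ≤ k → 0 ≤ ω k) ∧
    (∀ N, 2 ≤ N → ∑ k ∈ Finset.Icc 2 N, ω k ≤
      ((1 / 2) * a 0 + 2 * α * (a 0 - a 1) / (a 1 - α)) * ℓ ^ 2) ∧
    Summable (fun k => ω (k + 2)) ∧
    Tendsto ω atTop (nhds 0) := by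
  set g := potential α a
  have hg := antitone_potential hα.le hmono hgt hlog
  have hω' : ∀ k, ω (k + 2) = (g k - g (k + 1)) * ‖z (k + 2)‖ ^ 2 := fun k => by
    rw [hω (k + 2) (by omega)]
    simp only [g, potential, Nat.add_sub_cancel, show k + 2 - 1 = k + 1 by omega]
    ring
  have hnonneg : ∀ k, 0 ≤ ω (k + 2) := fun k => by
    rw [hω']; exact mul_nonneg (sub_nonneg.2 (hg k.le_succ)) (sq_nonneg _)
  have hpartial : ∀ n, ∑ i ∈ range n, ω (i + 2) ≤ g 0 * ℓ ^ 2 := fun n => by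
    simp only [hω']
    exact sum_range_sub_succ_mul_le hg (potential_nonneg hα.le hmono hgt) (sq_nonneg ℓ)
      (fun k => pow_le_pow_left₀ (norm_nonneg _) (hz _) 2) n
  have hsummable : Summable fun k => ω (k + 2) := summable_of_sum_range_le hnonneg hpartial
  refine ⟨fun k hk => ?_, fun N hN => ?_, hsummable,
    (tendsto_add_atTop_iff_nat 2).mp hsummable.tendsto_atTop_zero⟩
  · obtain ⟨m, rfl⟩ := Nat.exists_eq_add_of_le' hk
    exact hnonneg m
  · have hg0 : g 0 = (1 / 2) * a 0 + 2 * α * (a 0 - a 1) / (a 1 - α) := by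
      simp only [g, potential]; ring
    rw [← hg0, ← Finset.Ico_add_one_right_eq_Icc, sum_Ico_eq_sum_range]
    simpa [add_comm] using hpartial (N + 1 - 2)

/-- Under the step-size conditions on `(α_k)` and boundedness of `(z^k)`,
the quantities `ω_k` are nonnegative, their partial sums from `k = 2` are bounded by
`((1/2)α_0 + 2α(α_0 − α_1)/(α_1 − α))ℓ²`, the series `∑_{k ≥ 2} ω_k` converges, and
`ω_k → 0`. -/
theorem stmt_7 (s : ℕ) (α ℓ : ℝ) (hα : 0 < α) (hℓ : 0 ≤ ℓ)
    (a : ℕ → ℝ) (hmono : ∀ k, a (k + 1) ≤ a k) (hgt : ∀ k, α < a k)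
    (hlog : ∀ k, (a k - α) * (a (k + 2) - α) ≥ (a (k + 1) - α) ^ 2)
    (z : ℕ → EuclideanSpace ℝ (Fin s)) (hz : ∀ k, ‖z k‖ ≤ ℓ)
    (ω : ℕ → ℝ)
    (hω : ∀ k, 2 ≤ k → ω k =
      ((1 / 2) * (a (k - 2) - a (k - 1)) +
        2 * α * ((a (k - 2) - a (k - 1)) / (a (k - 1) - α) -
          (a (k - 1) - a k) / (a k - α))) * ‖z k‖ ^ 2) :
    (∀ k, 2 ≤ k → 0 ≤ ω k) ∧
    (∀ N, 2 ≤ N → ∑ k ∈ Finset.Icc 2 N, ω k ≤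
      ((1 / 2) * a 0 + 2 * α * (a 0 - a 1) / (a 1 - α)) * ℓ ^ 2) ∧
    Summable (fun k => ω (k + 2)) ∧
    Tendsto ω atTop (nhds 0) :=
  stmt_7_general s α ℓ hα a hmono hgt hlog z hz ω hω
end

section
/- In ℝ², let c = (2, 2), ρ_k = 1 + (k+1)²/2 and α_k = 1 + 3/(k+1) for k ≥ 0, and let clamp : ℝ² → ℝ² act componentwise by clamp(w)_i = max(−1, min(1, w_i)) (the projection onto the unit ball of the sup-norm). Let x^0 = (0, 0) and z^0 ∈ ℝ² with ‖z^0‖_∞ ≤ 1, and define recursively x^{k+1} = (1 + 1/ρ_k) x^k − (1/ρ_k) z^k + (1/ρ_k) c and z^{k+1} = clamp((z^k + x^{k+1})/α_k). Then for every k ≥ 0: ‖z^k‖_∞ ≤ 1; both coordinates of x^k satisfy 0 ≤ (x^k)_i < 75, with (x^k)_i > 0 for k ≥ 1; and consequently ‖x^k‖₂ ≤ 75√2 < 150. -/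
/-!
Since `z^k ≥ -1`, each step gives `x^{k+1} + 3 ≤ (1 + 1/ρ_k)(x^k + 3)`, and the factor
`1 + 1/ρ_k` is dominated by the ratio `g(k+1)/g(k)` of `g(k) = (2k+1)/(2k+7)`. The product of
the factors therefore telescopes to at most `g(k)/g(0) < 7`, so `x^k + 3 < 21`. Positivity comes
from `z^k ≤ 1`, which makes `x` strictly increasing from `x^0 = 0`.
-/

lemma abs_max_neg_one_min_one_le (t : ℝ) : |max (-1) (min 1 t)| ≤ 1 :=
  abs_le.2 ⟨le_max_left _ _, max_le (by norm_num) (min_le_left _ _)⟩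

lemma le_of_le_mul_of_mul_le_succ {u g m : ℕ → ℝ} (hm : ∀ k, 0 ≤ m k)
    (hu : ∀ k, u (k + 1) ≤ m k * u k) (hg : ∀ k, m k * g k ≤ g (k + 1)) (h0 : u 0 ≤ g 0) :
    ∀ k, u k ≤ g k
  | 0 => h0
  | k + 1 =>
    calc u (k + 1) ≤ m k * u k := hu k
      _ ≤ m k * g k := mul_le_mul_of_nonneg_left (le_of_le_mul_of_mul_le_succ hm hu hg h0 k) (hm k)
      _ ≤ g (k + 1) := hg k

lemma sqrt_sq_add_sq_le_mul_sqrt_two {a b c : ℝ} (ha : |a| ≤ c) (hb : |b| ≤ c) :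
    √(a ^ 2 + b ^ 2) ≤ c * √2 := by
  have hc : 0 ≤ c := (abs_nonneg a).trans ha
  have ha2 : a ^ 2 ≤ c ^ 2 := sq_abs a ▸ pow_le_pow_left₀ (abs_nonneg a) ha 2
  have hb2 : b ^ 2 ≤ c ^ 2 := sq_abs b ▸ pow_le_pow_left₀ (abs_nonneg b) hb 2
  calc √(a ^ 2 + b ^ 2) ≤ √(c ^ 2 * 2) := Real.sqrt_le_sqrt (by linarith)
    _ = c * √2 := by rw [Real.sqrt_mul (sq_nonneg c), Real.sqrt_sq hc]

section RelaxationStep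

variable {x z r : ℝ}

lemma lt_relaxation_step (hx : 0 ≤ x) (hz : z ≤ 1) (hr : 0 < r) :
    x < (1 + r) * x - r * z + r * 2 := by
  nlinarith

lemma relaxation_step_add_three_le (hz : -1 ≤ z) (hr : 0 ≤ r) :
    (1 + r) * x - r * z + r * 2 + 3 ≤ (1 + r) * (x + 3) := by
  nlinarith

end RelaxationStep

lemma one_add_inv_mul_le_succ (k : ℕ) :
    (1 + 1 / (1 + ((k : ℝ) + 1) ^ 2 / 2)) * (21 * (2 * (k : ℝ) + 1) / (2 * k + 7)) ≤
      21 * (2 * ((k + 1 : ℕ) : ℝ) + 1) / (2 * ((k + 1 : ℕ) : ℝ) + 7) := by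
  push_cast
  rw [show 1 + 1 / (1 + ((k : ℝ) + 1) ^ 2 / 2) = (k ^ 2 + 2 * k + 5) / (k ^ 2 + 2 * k + 3) by
      field_simp; ring, div_mul_div_comm, div_le_div_iff₀ (by positivity) (by positivity)]
  -- the difference of the two sides is a positive multiple of `2 (k - 2)² + 1`
  nlinarith [sq_nonneg ((k : ℝ) - 2), (k.cast_nonneg : (0 : ℝ) ≤ k)]

theorem stmt_8_general (x z : ℕ → Fin 2 → ℝ) (ρ a : ℕ → ℝ)
    (hρ : ∀ k, ρ k = 1 + ((k : ℝ) + 1) ^ 2 / 2)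
    (hx0 : ∀ i, x 0 i = 0)
    (hz0 : ∀ i, |z 0 i| ≤ 1)
    (hx : ∀ k i, x (k + 1) i = (1 + 1 / ρ k) * x k i - (1 / ρ k) * z k i + (1 / ρ k) * 2)
    (hz : ∀ k i, z (k + 1) i = max (-1) (min 1 ((z k i + x (k + 1) i) / a k))) :
    (∀ k i, |z k i| ≤ 1) ∧
    (∀ k i, 0 ≤ x k i ∧ x k i < 75) ∧
    (∀ k, 1 ≤ k → ∀ i, 0 < x k i) ∧
    (∀ k, Real.sqrt (x k 0 ^ 2 + x k 1 ^ 2) ≤ 75 * Real.sqrt 2) ∧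
    75 * Real.sqrt 2 < 150 := by
  have hzb : ∀ k i, |z k i| ≤ 1
    | 0, i => hz0 i
    | k + 1, i => hz k i ▸ abs_max_neg_one_min_one_le _
  have hr : ∀ k, 0 < 1 / ρ k := fun k => by rw [hρ]; positivity
  have hstep : ∀ k i, 0 ≤ x k i → x k i < x (k + 1) i := fun k i h =>
    hx k i ▸ lt_relaxation_step h (abs_le.1 (hzb k i)).2 (hr k)
  have hnonneg : ∀ k i, 0 ≤ x k i := fun k i => by
    induction k with
    | zero => exact (hx0 i).ge
    | succ k ih => exact ih.trans (hstep k i ih).le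
  have hupper : ∀ k i, x k i + 3 ≤ 21 * (2 * (k : ℝ) + 1) / (2 * k + 7) := fun k i =>
    le_of_le_mul_of_mul_le_succ (u := fun k => x k i + 3) (m := fun k => 1 + 1 / ρ k)
      (fun k => by positivity [hr k])
      (fun k => hx k i ▸ relaxation_step_add_three_le (abs_le.1 (hzb k i)).1 (hr k).le)
      (fun k => hρ k ▸ one_add_inv_mul_le_succ k) (by norm_num [hx0]) k
  have hlt : ∀ k i, x k i < 75 := fun k i => by
    have := hupper k i
    rw [le_div_iff₀ (by positivity)] at this
    nlinarith [hnonneg k i]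
  refine ⟨hzb, fun k i => ⟨hnonneg k i, hlt k i⟩, ?_, fun k => ?_, ?_⟩
  · rintro (_ | k) hk i
    · omega
    · exact (hnonneg k i).trans_lt (hstep k i (hnonneg k i))
  · have hbound : ∀ i, |x k i| ≤ 75 := fun i =>
      (abs_of_nonneg (hnonneg k i)).trans_le (hlt k i).le
    exact sqrt_sq_add_sq_le_mul_sqrt_two (hbound 0) (hbound 1)
  · nlinarith [(Real.sqrt_lt' (by norm_num : (0 : ℝ) < 2)).2 (by norm_num : (2 : ℝ) < 2 ^ 2)]

/-- For the iteration of Example 4.4 of the paper (in `ℝ²`, with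
`c = (2,2)`, `ρ_k = 1 + (k+1)²/2`, `α_k = 1 + 3/(k+1)`, componentwise clamping to `[−1,1]`,
`x⁰ = 0` and `‖z⁰‖_∞ ≤ 1`), one has `‖z^k‖_∞ ≤ 1`, `0 ≤ (x^k)_i < 75` (with strict
positivity for `k ≥ 1`), and `‖x^k‖₂ ≤ 75√2 < 150` for every `k`. -/
theorem stmt_8 (x z : ℕ → Fin 2 → ℝ) (ρ a : ℕ → ℝ)
    (hρ : ∀ k, ρ k = 1 + ((k : ℝ) + 1) ^ 2 / 2)
    (ha : ∀ k, a k = 1 + 3 / ((k : ℝ) + 1))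
    (hx0 : ∀ i, x 0 i = 0)
    (hz0 : ∀ i, |z 0 i| ≤ 1)
    (hx : ∀ k i, x (k + 1) i = (1 + 1 / ρ k) * x k i - (1 / ρ k) * z k i + (1 / ρ k) * 2)
    (hz : ∀ k i, z (k + 1) i = max (-1) (min 1 ((z k i + x (k + 1) i) / a k))) :
    (∀ k i, |z k i| ≤ 1) ∧
    (∀ k i, 0 ≤ x k i ∧ x k i < 75) ∧
    (∀ k, 1 ≤ k → ∀ i, 0 < x k i) ∧
    (∀ k, Real.sqrt (x k 0 ^ 2 + x k 1 ^ 2) ≤ 75 * Real.sqrt 2) ∧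
    75 * Real.sqrt 2 < 150 :=
  stmt_8_general x z ρ a hρ hx0 hz0 hx hz
end

section
/- In ℝ², let c = (2, 2), ρ_k = 1 + (k+1)²/2 and α_k = 1 + 3/(k+1) for k ≥ 0, and let clamp : ℝ² → ℝ² act componentwise by clamp(w)_i = max(−1, min(1, w_i)). Let x^0 = (0, 0) and z^0 ∈ ℝ² with ‖z^0‖_∞ ≤ 1, and define recursively x^{k+1} = (1 + 1/ρ_k) x^k − (1/ρ_k) z^k + (1/ρ_k) c and z^{k+1} = clamp((z^k + x^{k+1})/α_k). Then each coordinate sequence ((x^k)_i)_{k≥0} is nondecreasing (indeed (x^{k+1})_i ≥ (x^k)_i + 1/ρ_k) and converges to a limit x̄_i with 1/ρ_0 ≤ x̄_i ≤ 75; moreover, for every accumulation point z̄ of the bounded sequence (z^k)_{k≥0} and for i ∈ {1, 2} it holds z̄_i − x̄_i < 2; in particular z̄ − x̄ ≠ c, so the limit fails the KKT condition c = z̄ − x̄ of the problem of Example 4.4. -/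
open Filter Finset

/-!
The clamp keeps `z^k` in `[-1, 1]`, and the update reads `x^{k+1} = x^k + (x^k - z^k + 2)/ρ_k`.
Hence `x^k ≥ 0` and every step gains at least `1/ρ_k`, while `x^{k+1} + 3 ≤ (1 + 1/ρ_k)(x^k + 3)`
gives `x^k + 3 ≤ 3 exp (∑ 1/ρ_j) ≤ 3 e^3 ≤ 78`, the sum being dominated by a telescoping one.
So `x^k` converges to some `x̄ ≥ 1/ρ_0 > 0`, whereas every accumulation point of `z` is at most `1`,
so that `z̄_i - x̄_i < 1`.
-/

theorem le_mul_exp_sum_of_le_one_add_mul {u r : ℕ → ℝ} (hr : ∀ k, 0 ≤ 1 + r k) (hu0 : 0 ≤ u 0)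
    (hu : ∀ k, u (k + 1) ≤ (1 + r k) * u k) (k : ℕ) :
    u k ≤ u 0 * Real.exp (∑ j ∈ range k, r j) := by
  induction k with
  | zero => simp
  | succ k ih =>
    calc u (k + 1) ≤ (1 + r k) * (u 0 * Real.exp (∑ j ∈ range k, r j)) :=
          (hu k).trans (mul_le_mul_of_nonneg_left ih (hr k))
      _ ≤ Real.exp (r k) * (u 0 * Real.exp (∑ j ∈ range k, r j)) := by
          gcongr
          linarith [Real.add_one_le_exp (r k)]
      _ = u 0 * Real.exp (∑ j ∈ range (k + 1), r j) := by
          rw [sum_range_succ, Real.exp_add]; ring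

theorem sum_range_one_div_one_add_sq_div_two_le (n : ℕ) :
    ∑ j ∈ range n, 1 / (1 + ((j : ℝ) + 1) ^ 2 / 2) ≤ 8 / 3 := by
  have htelescope (j : ℕ) : 1 / (1 + (((j + 1 : ℕ) : ℝ) + 1) ^ 2 / 2) ≤
      2 / ((j : ℝ) + 1) - 2 / (((j + 1 : ℕ) : ℝ) + 1) := by
    push_cast
    rw [div_sub_div _ _ (by positivity) (by positivity),
      div_le_div_iff₀ (by positivity) (by positivity)]
    nlinarith
  cases n with
  | zero => norm_num
  | succ n =>
    have htail := (sum_le_sum fun j (_ : j ∈ range n) => htelescope j).trans_eq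
      (sum_range_sub' (fun j : ℕ => 2 / ((j : ℝ) + 1)) n)
    have hlast : 0 ≤ 2 / ((n : ℝ) + 1) := by positivity
    rw [sum_range_succ']
    norm_num at htail ⊢
    linarith

theorem exp_three_le_26 : Real.exp 3 ≤ 26 := by
  have h : Real.exp 3 = Real.exp 1 ^ 3 := by rw [← Real.exp_nat_mul]; norm_num
  rw [h]
  calc Real.exp 1 ^ 3 ≤ 2.7182818286 ^ 3 := by
        gcongr; exact Real.exp_one_lt_d9.le
    _ ≤ 26 := by norm_num

namespace Example44

variable {x z s : ℕ → ℝ}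

theorem nonneg (hs : ∀ k, 0 ≤ s k) (hz : ∀ k, z k ≤ 1) (hx0 : 0 ≤ x 0)
    (hx : ∀ k, x (k + 1) = (1 + s k) * x k - s k * z k + s k * 2) (k : ℕ) : 0 ≤ x k := by
  induction k with
  | zero => exact hx0
  | succ k ih =>
    rw [hx]
    nlinarith [hs k, mul_nonneg (hs k) ih, mul_le_mul_of_nonneg_left (hz k) (hs k)]

theorem add_le_succ (hs : ∀ k, 0 ≤ s k) (hz : ∀ k, z k ≤ 1) (hx0 : 0 ≤ x 0)
    (hx : ∀ k, x (k + 1) = (1 + s k) * x k - s k * z k + s k * 2) (k : ℕ) :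
    x k + s k ≤ x (k + 1) := by
  rw [hx]
  nlinarith [mul_nonneg (hs k) (nonneg hs hz hx0 hx k), mul_le_mul_of_nonneg_left (hz k) (hs k)]

theorem add_three_le (hs : ∀ k, 0 ≤ s k) (hz : ∀ k, -1 ≤ z k) (hx0 : -3 ≤ x 0)
    (hx : ∀ k, x (k + 1) = (1 + s k) * x k - s k * z k + s k * 2) (k : ℕ) :
    x k + 3 ≤ (x 0 + 3) * Real.exp (∑ j ∈ range k, s j) := by
  refine le_mul_exp_sum_of_le_one_add_mul (u := fun k => x k + 3) (fun k => ?_) (by linarith)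
    (fun k => ?_) k
  · linarith [hs k]
  · simp only [hx]
    nlinarith [mul_le_mul_of_nonneg_left (hz k) (hs k)]

end Example44

theorem stmt_9_general (x z : ℕ → Fin 2 → ℝ) (ρ a : ℕ → ℝ)
    (hρ : ∀ k, ρ k = 1 + ((k : ℝ) + 1) ^ 2 / 2)
    (hx0 : ∀ i, x 0 i = 0)
    (hz0 : ∀ i, |z 0 i| ≤ 1)
    (hx : ∀ k i, x (k + 1) i = (1 + 1 / ρ k) * x k i - (1 / ρ k) * z k i + (1 / ρ k) * 2)
    (hz : ∀ k i, z (k + 1) i = max (-1) (min 1 ((z k i + x (k + 1) i) / a k))) :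
    (∀ k i, x k i + 1 / ρ k ≤ x (k + 1) i) ∧
    ∃ xbar : Fin 2 → ℝ,
      (∀ i, Tendsto (fun k => x k i) atTop (nhds (xbar i)) ∧
        1 / ρ 0 ≤ xbar i ∧ xbar i ≤ 75) ∧
      ∀ zbar : Fin 2 → ℝ,
        (∃ φ : ℕ → ℕ, StrictMono φ ∧
          ∀ i, Tendsto (fun k => z (φ k) i) atTop (nhds (zbar i))) →
        (∀ i, zbar i - xbar i < 2) ∧ (fun i => zbar i - xbar i) ≠ (fun _ => (2 : ℝ)) := by
  have hs k : 0 < 1 / ρ k := by rw [hρ]; positivity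
  have hz_le k i : -1 ≤ z k i ∧ z k i ≤ 1 := by
    cases k with
    | zero => exact abs_le.mp (hz0 i)
    | succ k => rw [hz]; exact ⟨le_max_left _ _, max_le (by norm_num) (min_le_left _ _)⟩
  have hstep k i : x k i + 1 / ρ k ≤ x (k + 1) i :=
    Example44.add_le_succ (x := (x · i)) (fun k => (hs k).le) (fun k => (hz_le k i).2) (hx0 i).ge
      (fun k => hx k i) k
  have hmono i : Monotone (x · i) := monotone_nat_of_le_succ fun k => by linarith [hstep k i, hs k]
  have hle k i : x k i ≤ 75 := by
    have hsum : ∑ j ∈ range k, 1 / ρ j ≤ 3 := by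
      simp only [hρ]; linarith [sum_range_one_div_one_add_sq_div_two_le k]
    have := Example44.add_three_le (x := (x · i)) (fun k => (hs k).le) (fun k => (hz_le k i).1) (by simp [hx0])
      (fun k => hx k i) k
    rw [hx0, zero_add] at this
    linarith [Real.exp_le_exp.mpr hsum, exp_three_le_26]
  obtain ⟨xbar, hxbar⟩ : ∃ xbar : Fin 2 → ℝ, ∀ i, Tendsto (x · i) atTop (nhds (xbar i)) :=
    ⟨_, fun i => tendsto_atTop_ciSup (hmono i) ⟨75, Set.forall_mem_range.mpr (hle · i)⟩⟩
  have hlower i : 1 / ρ 0 ≤ xbar i := by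
    linarith [hstep 0 i, hx0 i, (hmono i).ge_of_tendsto (hxbar i) 1]
  refine ⟨hstep, xbar, fun i => ⟨hxbar i, hlower i, le_of_tendsto' (hxbar i) (hle · i)⟩, ?_⟩
  rintro zbar ⟨φ, -, hφ⟩
  have hlt i : zbar i - xbar i < 2 := by
    linarith [le_of_tendsto' (hφ i) fun k => (hz_le (φ k) i).2, hlower i, hs 0]
  exact ⟨hlt, fun h => (hlt 0).ne (congrFun h 0)⟩

/-- For the iteration of Example 4.4 of the paper, each coordinate of
`x^k` is nondecreasing (with `(x^{k+1})_i ≥ (x^k)_i + 1/ρ_k`) and converges to a limit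
`x̄_i ∈ [1/ρ_0, 75]`; moreover every accumulation point `z̄` of `(z^k)` satisfies
`z̄_i − x̄_i < 2` for `i ∈ {1,2}`, hence `z̄ − x̄ ≠ c = (2,2)` and the limit fails the KKT
condition. -/
theorem stmt_9 (x z : ℕ → Fin 2 → ℝ) (ρ a : ℕ → ℝ)
    (hρ : ∀ k, ρ k = 1 + ((k : ℝ) + 1) ^ 2 / 2)
    (ha : ∀ k, a k = 1 + 3 / ((k : ℝ) + 1))
    (hx0 : ∀ i, x 0 i = 0)
    (hz0 : ∀ i, |z 0 i| ≤ 1)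
    (hx : ∀ k i, x (k + 1) i = (1 + 1 / ρ k) * x k i - (1 / ρ k) * z k i + (1 / ρ k) * 2)
    (hz : ∀ k i, z (k + 1) i = max (-1) (min 1 ((z k i + x (k + 1) i) / a k))) :
    (∀ k i, x k i + 1 / ρ k ≤ x (k + 1) i) ∧
    ∃ xbar : Fin 2 → ℝ,
      (∀ i, Tendsto (fun k => x k i) atTop (nhds (xbar i)) ∧
        1 / ρ 0 ≤ xbar i ∧ xbar i ≤ 75) ∧
      ∀ zbar : Fin 2 → ℝ,
        (∃ φ : ℕ → ℕ, StrictMono φ ∧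
          ∀ i, Tendsto (fun k => z (φ k) i) atTop (nhds (zbar i))) →
        (∀ i, zbar i - xbar i < 2) ∧ (fun i => zbar i - xbar i) ≠ (fun _ => (2 : ℝ)) :=
  stmt_9_general x z ρ a hρ hx0 hz0 hx hz
end

section
/- Let S ⊆ ℝ^n be nonempty, convex and compact, A : ℝ^n → ℝ^s linear, r > 0, and let g : ℝ^s → ℝ ∪ {+∞} be proper, convex and lower semicontinuous such that the set K_r := {z ∈ ℝ^s : dist(z, A(S)) ≤ r} is contained in int(dom g) and g is Lipschitz continuous on K_r with constant ℓ > 0. Let α > 0 with αℓ < r, let (α_k)_{k≥0} be positive reals, let (b^k)_{k≥0} be a sequence in A(S), and let (z^k)_{k≥0} be a sequence in ℝ^s with ‖z^0‖ ≤ ℓ such that, for every k ≥ 0, z^{k+1} is a minimizer over ℝ^s of z ↦ g*(z) − ⟨b^k + α z^k, z⟩ + (α_k/2)‖z‖². Then ‖z^k‖ ≤ ℓ for all k ≥ 0. -/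
/-!
Induct on `k` and put `c = b^k + α z^k`. Since `‖z^k‖ ≤ ℓ`, the closed ball of radius
`ρ = r - αℓ` about `c` lies in `K_r`, where `g` is finite, convex and `ℓ`-Lipschitz. Separating
the strict epigraph of `g` over the open ball from `(c, g c)` gives a subgradient `w` of `g` at `c`
with `‖w‖ ≤ ℓ`, so that `g*(w) = ⟪w, c⟫ - g c`. Testing the supremum defining `g*(ζ)` at
`c + (ρ/‖ζ‖) ζ` gives `g*(ζ) ≥ ⟪ζ, c⟫ + ρ‖ζ‖ - g c - ℓρ`. Comparing the objective at the
minimizer `ζ = z^{k+1}` with its value at `w` yields `ρ (‖ζ‖ - ℓ) + (α_k/2) (‖ζ‖² - ‖w‖²) ≤ 0`,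
hence `‖ζ‖ ≤ ℓ`.
-/

open RealInnerProductSpace Metric Filter Topology
open scoped NNReal

theorem closedBall_subset_setOf_infDist_le {X : Type*} [PseudoMetricSpace X] {s : Set X}
    {c : X} {a ρ : ℝ} (hc : infDist c s ≤ a) : closedBall c ρ ⊆ {v | infDist v s ≤ a + ρ} :=
  fun x hx => (infDist_le_infDist_add_dist (x := x) (y := c)).trans
    (add_le_add hc (mem_closedBall.mp hx))

variable {E : Type*} [NormedAddCommGroup E]

theorem EReal.lipschitzOnWith_toReal {g : E → EReal} {s : Set E} {ℓ : ℝ≥0}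
    (hbot : ∀ v, g v ≠ ⊥) (hfin : ∀ v ∈ s, g v ≠ ⊤)
    (hlip : ∀ v ∈ s, ∀ w ∈ s, g v ≤ g w + ((ℓ * ‖v - w‖ : ℝ) : EReal)) :
    LipschitzOnWith ℓ (fun v => (g v).toReal) s := by
  refine LipschitzOnWith.of_le_add_mul ℓ fun v hv w hw => ?_
  have h := hlip v hv w hw
  rwa [← EReal.coe_toReal (hfin v hv) (hbot v), ← EReal.coe_toReal (hfin w hw) (hbot w),
    ← EReal.coe_add, EReal.coe_le_coe_iff, ← dist_eq_norm] at h

variable [InnerProductSpace ℝ E]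

noncomputable def fenchelConjugate (g : E → EReal) (y : E) : EReal :=
  ⨆ x, ((⟪y, x⟫ : ℝ) : EReal) - g x

theorem EReal.convexOn_toReal {g : E → EReal} (hbot : ∀ v, g v ≠ ⊥)
    (hconv : ∀ v w : E, ∀ a b : ℝ, 0 ≤ a → 0 ≤ b → a + b = 1 →
      g (a • v + b • w) ≤ (a : EReal) * g v + (b : EReal) * g w) :
    ConvexOn ℝ {v | g v ≠ ⊤} (fun v => (g v).toReal) := by
  have key : ∀ v w : E, g v ≠ ⊤ → g w ≠ ⊤ → ∀ a b : ℝ, 0 ≤ a → 0 ≤ b → a + b = 1 →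
      g (a • v + b • w) ≤ ((a * (g v).toReal + b * (g w).toReal : ℝ) : EReal) := by
    intro v w hv hw a b ha hb hab
    have h := hconv v w a b ha hb hab
    rwa [← EReal.coe_toReal hv (hbot v), ← EReal.coe_toReal hw (hbot w)] at h
  refine ⟨fun v hv w hw a b ha hb hab => ?_, fun v hv w hw a b ha hb hab => ?_⟩
  · exact ne_top_of_le_ne_top (EReal.coe_ne_top _) (key v w hv hw a b ha hb hab)
  · have h := key v w hv hw a b ha hb hab
    have hfin := ne_top_of_le_ne_top (EReal.coe_ne_top _) h
    rwa [← EReal.coe_toReal hfin (hbot _), EReal.coe_le_coe_iff] at h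

theorem ConvexOn.inner_sub_le_of_eventually {D : Set E} {f : E → ℝ} {c w x : E}
    (hf : ConvexOn ℝ D f) (hc : c ∈ D) (hx : x ∈ D)
    (hloc : ∀ᶠ y in 𝓝 c, ⟪w, y - c⟫ ≤ f y - f c) : ⟪w, x - c⟫ ≤ f x - f c := by
  have hlim : Tendsto (fun t : ℝ => c + t • (x - c)) (𝓝[>] 0) (𝓝 c) := by
    have h : Tendsto (fun t : ℝ => c + t • (x - c)) (𝓝 0) (𝓝 (c + (0 : ℝ) • (x - c))) :=
      (continuous_const.add (continuous_id.smul continuous_const)).tendsto 0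
    rw [zero_smul, add_zero] at h
    exact h.mono_left nhdsWithin_le_nhds
  obtain ⟨t, hloct, ht⟩ := ((hlim.eventually hloc).and (Ioo_mem_nhdsGT one_pos)).exists
  have hseg : c + t • (x - c) = (1 - t) • c + t • x := by module
  have hconvt : f ((1 - t) • c + t • x) ≤ (1 - t) • f c + t • f x :=
    hf.2 hc hx (by linarith [ht.2]) ht.1.le (by ring)
  rw [← hseg, smul_eq_mul, smul_eq_mul] at hconvt
  rw [add_sub_cancel_left, inner_smul_right] at hloct
  have : t * ⟪w, x - c⟫ ≤ t * (f x - f c) := by linarith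
  exact le_of_mul_le_mul_left this ht.1

theorem norm_le_of_forall_inner_le {w : E} {ρ ℓ : ℝ} (hρ : 0 < ρ) (hℓ : 0 ≤ ℓ)
    (h : ∀ v ∈ ball (0 : E) ρ, ⟪w, v⟫ ≤ ℓ * ‖v‖) : ‖w‖ ≤ ℓ := by
  rw [← innerSL_apply_norm ℝ w]
  refine ContinuousLinearMap.opNorm_le_of_ball hρ hℓ fun v hv => ?_
  have hneg := h (-v) (by simpa using hv)
  rw [inner_neg_right, norm_neg] at hneg
  rw [innerSL_apply_apply, Real.norm_eq_abs, abs_le]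
  exact ⟨by linarith, h v hv⟩

section Complete

variable [CompleteSpace E]

theorem ConvexOn.exists_forall_inner_sub_le {D : Set E} {f : E → ℝ} {c : E} {ρ : ℝ}
    (hf : ConvexOn ℝ D f) (hρ : 0 < ρ) (hball : ball c ρ ⊆ D)
    (hcont : ContinuousOn f (ball c ρ)) : ∃ w : E, ∀ x ∈ D, ⟪w, x - c⟫ ≤ f x - f c := by
  set T : Set (E × ℝ) := {p | p.1 ∈ ball c ρ ∧ f p.1 < p.2}
  have hT_convex : Convex ℝ T := (hf.subset hball (convex_ball c ρ)).convex_strict_epigraph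
  have hT_open : IsOpen T := by
    have h := (hcont.comp continuousOn_fst fun p hp => hp.1).sub continuousOn_snd
      |>.isOpen_inter_preimage (isOpen_ball.prod isOpen_univ) (isOpen_Iio (a := (0 : ℝ)))
    convert h using 1
    ext p
    simp [T, sub_neg]
  obtain ⟨φ, hφ⟩ := geometric_hahn_banach_open_point hT_convex hT_open
    (fun h => lt_irrefl _ h.2 : (c, f c) ∉ T)
  have hφ_apply : ∀ x t, φ (x, t) = φ (x, 0) + t * φ (0, 1) := by
    intro x t
    rw [← smul_eq_mul, ← map_smul, ← map_add, Prod.smul_mk, smul_zero, smul_eq_mul, mul_one,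
      Prod.mk_add_mk, add_zero, zero_add]
  set β := φ (0, 1)
  have hβ : β < 0 := by
    have h := hφ (c, f c + 1) ⟨mem_ball_self hρ, by linarith⟩
    rw [hφ_apply c (f c + 1), hφ_apply c (f c)] at h
    linarith
  -- `φ (x, t) = -β (⟪w, x⟫ - t)`: the separating hyperplane is the graph of `x ↦ ⟪w, x⟫ + const`.
  set w : E := (-β)⁻¹ • (InnerProductSpace.toDual ℝ E).symm (φ.comp (.inl ℝ E ℝ))
  have hw : ∀ x, ⟪w, x⟫ = (-β)⁻¹ * φ (x, 0) := by
    intro x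
    simp [w, real_inner_smul_left, InnerProductSpace.toDual_symm_apply]
  refine ⟨w, fun x hx => hf.inner_sub_le_of_eventually (hball (mem_ball_self hρ)) hx ?_⟩
  filter_upwards [isOpen_ball.mem_nhds (mem_ball_self hρ)] with y hy
  refine le_of_forall_pos_lt_add fun ε hε => ?_
  have h := hφ (y, f y + ε) ⟨hy, by linarith⟩
  rw [hφ_apply y (f y + ε), hφ_apply c (f c)] at h
  rw [inner_sub_right, hw, hw, ← mul_sub, inv_mul_lt_iff₀ (by linarith)]
  nlinarith

theorem ConvexOn.exists_forall_inner_sub_le_of_lipschitzOnWith {D : Set E} {f : E → ℝ} {c : E}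
    {ρ : ℝ} {ℓ : ℝ≥0} (hf : ConvexOn ℝ D f) (hρ : 0 < ρ) (hball : ball c ρ ⊆ D)
    (hlip : LipschitzOnWith ℓ f (ball c ρ)) :
    ∃ w : E, ‖w‖ ≤ ℓ ∧ ∀ x ∈ D, ⟪w, x - c⟫ ≤ f x - f c := by
  obtain ⟨w, hw⟩ := hf.exists_forall_inner_sub_le hρ hball hlip.continuousOn
  refine ⟨w, norm_le_of_forall_inner_le hρ ℓ.2 fun v hv => ?_, hw⟩
  have hcv : c + v ∈ ball c ρ := by simpa using hv
  calc ⟪w, v⟫ = ⟪w, c + v - c⟫ := by rw [add_sub_cancel_left]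
    _ ≤ f (c + v) - f c := hw _ (hball hcv)
    _ ≤ dist (f (c + v)) (f c) := (Real.dist_eq _ _).symm ▸ le_abs_self _
    _ ≤ ℓ * dist (c + v) c := hlip.dist_le_mul _ hcv _ (mem_ball_self hρ)
    _ = ℓ * ‖v‖ := by rw [dist_eq_norm, add_sub_cancel_left]

end Complete

theorem fenchelConjugate_le_of_forall_inner_sub_le {g : E → EReal} {c w : E}
    (hbot : ∀ v, g v ≠ ⊥) (hw : ∀ x, g x ≠ ⊤ → ⟪w, x - c⟫ ≤ (g x).toReal - (g c).toReal) :
    fenchelConjugate g w ≤ ((⟪w, c⟫ - (g c).toReal : ℝ) : EReal) := by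
  refine iSup_le fun x => ?_
  by_cases hx : g x = ⊤
  · rw [hx, EReal.sub_top]
    exact bot_le
  · rw [← EReal.coe_toReal hx (hbot x), ← EReal.coe_sub, EReal.coe_le_coe_iff]
    have := hw x hx
    rw [inner_sub_right] at this
    linarith

theorem le_fenchelConjugate_of_le_on_sphere {g : E → EReal} {c y : E} {ρ M : ℝ} (hρ : 0 ≤ ρ)
    (hy : y ≠ 0) (hg : ∀ x ∈ sphere c ρ, g x ≤ M) :
    ((⟪y, c⟫ + ρ * ‖y‖ - M : ℝ) : EReal) ≤ fenchelConjugate g y := by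
  have hy' : 0 < ‖y‖ := norm_pos_iff.mpr hy
  set x := c + (ρ / ‖y‖) • y
  have hx : x ∈ sphere c ρ := by
    rw [mem_sphere, dist_eq_norm, add_sub_cancel_left, norm_smul, Real.norm_eq_abs,
      abs_of_nonneg (by positivity), div_mul_cancel₀ _ hy'.ne']
  have hinner : ⟪y, x⟫ = ⟪y, c⟫ + ρ * ‖y‖ := by
    rw [inner_add_right, real_inner_smul_right, real_inner_self_eq_norm_sq]
    field_simp
  refine le_trans ?_ (le_iSup (fun x => ((⟪y, x⟫ : ℝ) : EReal) - g x) x)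
  rw [EReal.coe_sub, ← hinner]
  exact EReal.sub_le_sub le_rfl (hg x hx)

theorem norm_le_of_prox_minimizer {g : E → EReal} {c w ζ : E} {ρ ℓ β gc : ℝ} (hρ : 0 < ρ)
    (hβ : 0 ≤ β) (hw : ‖w‖ ≤ ℓ) (hgw : fenchelConjugate g w ≤ ((⟪w, c⟫ - gc : ℝ) : EReal))
    (hsphere : ∀ x ∈ sphere c ρ, g x ≤ ((gc + ℓ * ρ : ℝ) : EReal))
    (hmin : fenchelConjugate g ζ + ((-⟪c, ζ⟫ + β / 2 * ‖ζ‖ ^ 2 : ℝ) : EReal) ≤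
      fenchelConjugate g w + ((-⟪c, w⟫ + β / 2 * ‖w‖ ^ 2 : ℝ) : EReal)) :
    ‖ζ‖ ≤ ℓ := by
  by_contra! hζ
  have hζ0 : ζ ≠ 0 := norm_pos_iff.mp ((norm_nonneg w).trans_lt (hw.trans_lt hζ))
  have hchain := (add_le_add_left (le_fenchelConjugate_of_le_on_sphere hρ.le hζ0 hsphere) _).trans
    (hmin.trans (add_le_add_left hgw _))
  rw [← EReal.coe_add, ← EReal.coe_add, EReal.coe_le_coe_iff, real_inner_comm c ζ,
    real_inner_comm c w] at hchain
  have hsq : ‖w‖ ^ 2 < ‖ζ‖ ^ 2 := by gcongr; exact hw.trans_lt hζ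
  nlinarith [mul_le_mul_of_nonneg_left hsq.le hβ, mul_lt_mul_of_pos_left hζ hρ]

theorem stmt_11_general (n s : ℕ)
    (S : Set (EuclideanSpace ℝ (Fin n)))
    (A : EuclideanSpace ℝ (Fin n) →L[ℝ] EuclideanSpace ℝ (Fin s))
    (r : ℝ)
    (g : EuclideanSpace ℝ (Fin s) → EReal)
    (hproper₁ : ∀ v, g v ≠ ⊥)
    (hconv : ∀ v w : EuclideanSpace ℝ (Fin s), ∀ a b : ℝ, 0 ≤ a → 0 ≤ b → a + b = 1 →
      g (a • v + b • w) ≤ (a : EReal) * g v + (b : EReal) * g w)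
    (hKr : {v : EuclideanSpace ℝ (Fin s) | Metric.infDist v (A '' S) ≤ r} ⊆
      interior {v | g v ≠ ⊤})
    (ℓ : ℝ) (hℓ : 0 < ℓ)
    (hlip : ∀ v ∈ {v : EuclideanSpace ℝ (Fin s) | Metric.infDist v (A '' S) ≤ r},
      ∀ w ∈ {v : EuclideanSpace ℝ (Fin s) | Metric.infDist v (A '' S) ≤ r},
        g v ≤ g w + ((ℓ * ‖v - w‖ : ℝ) : EReal))
    (α : ℝ) (hα : 0 < α) (hαℓ : α * ℓ < r)
    (αs : ℕ → ℝ) (hαs : ∀ k, 0 < αs k)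
    (b : ℕ → EuclideanSpace ℝ (Fin s)) (hb : ∀ k, b k ∈ A '' S)
    (z : ℕ → EuclideanSpace ℝ (Fin s)) (hz0 : ‖z 0‖ ≤ ℓ)
    (hzmin : ∀ k, ∀ w : EuclideanSpace ℝ (Fin s),
      (⨆ v, ((⟪z (k + 1), v⟫ : ℝ) : EReal) - g v) +
        ((-⟪b k + α • z k, z (k + 1)⟫ + (αs k / 2) * ‖z (k + 1)‖ ^ 2 : ℝ) : EReal) ≤
      (⨆ v, ((⟪w, v⟫ : ℝ) : EReal) - g v) +
        ((-⟪b k + α • z k, w⟫ + (αs k / 2) * ‖w‖ ^ 2 : ℝ) : EReal)) :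
    ∀ k, ‖z k‖ ≤ ℓ := by
  set K := {v : EuclideanSpace ℝ (Fin s) | Metric.infDist v (A '' S) ≤ r}
  have hfin : ∀ v ∈ K, g v ≠ ⊤ := fun v hv => interior_subset (hKr hv)
  have hρ : 0 < r - α * ℓ := sub_pos.mpr hαℓ
  intro k
  induction k with
  | zero => exact hz0
  | succ k ih =>
    set c := b k + α • z k
    have hc : infDist c (A '' S) ≤ α * ℓ := calc
      _ ≤ dist c (b k) := infDist_le_dist_of_mem (hb k)
      _ = α * ‖z k‖ := by
        rw [dist_eq_norm, add_sub_cancel_left, norm_smul, Real.norm_of_nonneg hα.le]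
      _ ≤ α * ℓ := mul_le_mul_of_nonneg_left ih hα.le
    have hcK : closedBall c (r - α * ℓ) ⊆ K := by
      simpa only [add_sub_cancel] using closedBall_subset_setOf_infDist_le (ρ := r - α * ℓ) hc
    obtain ⟨w, hwℓ, hw⟩ :=
      (EReal.convexOn_toReal hproper₁ hconv).exists_forall_inner_sub_le_of_lipschitzOnWith hρ
        (fun x hx => hfin x (hcK (ball_subset_closedBall hx)))
        ((EReal.lipschitzOnWith_toReal (ℓ := ⟨ℓ, hℓ.le⟩) hproper₁ hfin hlip).mono
          (ball_subset_closedBall.trans hcK))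
    refine norm_le_of_prox_minimizer hρ (hαs k).le hwℓ
      (fenchelConjugate_le_of_forall_inner_sub_le hproper₁ hw) (fun x hx => ?_) (hzmin k w)
    have hcc : c ∈ K := hcK (mem_closedBall_self hρ.le)
    have h := hlip x (hcK (sphere_subset_closedBall hx)) c hcc
    rwa [← EReal.coe_toReal (hfin c hcc) (hproper₁ c), ← dist_eq_norm, mem_sphere.mp hx,
      ← EReal.coe_add] at h

/-- (Boundedness of the dual iterates.)  If `g` is proper, convex and lsc,
Lipschitz with constant `ℓ` on the `r`-enlargement `K_r` of `A(S)` which lies inside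
`int (dom g)`, `αℓ < r`, `‖z⁰‖ ≤ ℓ`, and every `z^{k+1}` is a minimizer of
`z ↦ g*(z) − ⟨b^k + α z^k, z⟩ + (α_k/2)‖z‖²` with `b^k ∈ A(S)`, then `‖z^k‖ ≤ ℓ` for all
`k`. -/
theorem stmt_11 (n s : ℕ)
    (S : Set (EuclideanSpace ℝ (Fin n)))
    (hSne : S.Nonempty) (hSconv : Convex ℝ S) (hScomp : IsCompact S)
    (A : EuclideanSpace ℝ (Fin n) →L[ℝ] EuclideanSpace ℝ (Fin s))
    (r : ℝ) (hr : 0 < r)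
    (g : EuclideanSpace ℝ (Fin s) → EReal)
    (hproper₁ : ∀ v, g v ≠ ⊥) (hproper₂ : ∃ v, g v ≠ ⊤)
    (hconv : ∀ v w : EuclideanSpace ℝ (Fin s), ∀ a b : ℝ, 0 ≤ a → 0 ≤ b → a + b = 1 →
      g (a • v + b • w) ≤ (a : EReal) * g v + (b : EReal) * g w)
    (hlsc : LowerSemicontinuous g)
    (hKr : {v : EuclideanSpace ℝ (Fin s) | Metric.infDist v (A '' S) ≤ r} ⊆
      interior {v | g v ≠ ⊤})
    (ℓ : ℝ) (hℓ : 0 < ℓ)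
    (hlip : ∀ v ∈ {v : EuclideanSpace ℝ (Fin s) | Metric.infDist v (A '' S) ≤ r},
      ∀ w ∈ {v : EuclideanSpace ℝ (Fin s) | Metric.infDist v (A '' S) ≤ r},
        g v ≤ g w + ((ℓ * ‖v - w‖ : ℝ) : EReal))
    (α : ℝ) (hα : 0 < α) (hαℓ : α * ℓ < r)
    (αs : ℕ → ℝ) (hαs : ∀ k, 0 < αs k)
    (b : ℕ → EuclideanSpace ℝ (Fin s)) (hb : ∀ k, b k ∈ A '' S)
    (z : ℕ → EuclideanSpace ℝ (Fin s)) (hz0 : ‖z 0‖ ≤ ℓ)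
    (hzmin : ∀ k, ∀ w : EuclideanSpace ℝ (Fin s),
      (⨆ v, ((⟪z (k + 1), v⟫ : ℝ) : EReal) - g v) +
        ((-⟪b k + α • z k, z (k + 1)⟫ + (αs k / 2) * ‖z (k + 1)‖ ^ 2 : ℝ) : EReal) ≤
      (⨆ v, ((⟪w, v⟫ : ℝ) : EReal) - g v) +
        ((-⟪b k + α • z k, w⟫ + (αs k / 2) * ‖w‖ ^ 2 : ℝ) : EReal)) :
    ∀ k, ‖z k‖ ≤ ℓ :=
  stmt_11_general n s S A r g hproper₁ hconv hKr ℓ hℓ hlip α hα hαℓ αs hαs b hb z hz0 hzmin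
end

section
/- Let u ∈ ℝ^n, R > 0 and S = {x ∈ ℝ^n : ‖x − u‖ ≤ R}. Let F : ℝ^n → ℝ be differentiable such that ∇F is L-Lipschitz continuous on S and ⟨∇F(x) − ∇F(y), x − y⟩ ≥ m‖x − y‖² for all x, y ∈ S, where m > 0. Let x̄ ∈ S be a critical point of F over S, i.e. −∇F(x̄) ∈ N_S(x̄). Then there exist σ > 0 and an open neighborhood V of x̄ such that for every x ∈ V ∩ S and every ξ ∈ N_S(x) it holds F(x) − F(x̄) ≤ σ·‖∇F(x) + ξ‖². (In the language of the paper: F + ι_S satisfies the Kurdyka–Łojasiewicz property at x̄ with exponent 1/2, i.e. with desingularization function φ(s) = 2σ'√s.) -/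
/-!
Strong monotonicity of `∇F` on the convex set `S` makes `F` convex there, so
`F x - F x̄ ≤ ⟪∇F x, x - x̄⟫ ≤ ⟪∇F x + ξ, x - x̄⟫` for `ξ ∈ N_S(x)`. The same monotonicity together
with the criticality of `x̄` gives the error bound `m ‖x - x̄‖² ≤ ⟪∇F x + ξ, x - x̄⟫`, and an
inner product that dominates `m ‖v‖²` is at most `‖w‖² / m`. Hence the inequality holds with
`σ = 1 / m` on all of `S`.
-/

open RealInnerProductSpace

section

variable {E : Type*} [NormedAddCommGroup E] [InnerProductSpace ℝ E]

def normalCone (S : Set E) (x : E) : Set E := {ξ | ∀ y ∈ S, ⟪ξ, y - x⟫ ≤ 0}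

theorem inner_sub_nonneg_of_mem_normalCone {S : Set E} {x y ξ : E} (hξ : ξ ∈ normalCone S x)
    (hy : y ∈ S) : 0 ≤ ⟪ξ, x - y⟫ := by
  have := hξ y hy
  rw [← neg_sub, inner_neg_right] at this
  linarith

theorem inner_le_inv_mul_norm_sq_of_mul_norm_sq_le_inner {m : ℝ} {v w : E} (hm : 0 < m)
    (h : m * ‖v‖ ^ 2 ≤ ⟪w, v⟫) : ⟪w, v⟫ ≤ m⁻¹ * ‖w‖ ^ 2 := by
  have hcs : ⟪w, v⟫ ≤ ‖w‖ * ‖v‖ := real_inner_le_norm w v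
  rw [← div_eq_inv_mul, le_div_iff₀ hm]
  -- `m ⟪w, v⟫ ≤ 2m ‖w‖ ‖v‖ - m² ‖v‖² ≤ ‖w‖²`
  nlinarith [sq_nonneg (‖w‖ - m * ‖v‖)]

variable [CompleteSpace E]

theorem sub_le_inner_gradient_of_monotoneOn {S : Set E} {F : E → ℝ} {gF : E → E}
    (hS : Convex ℝ S) (hF : ∀ x ∈ S, HasGradientAt F (gF x) x)
    (hmono : ∀ x ∈ S, ∀ y ∈ S, 0 ≤ ⟪gF x - gF y, x - y⟫) {x y : E} (hx : x ∈ S) (hy : y ∈ S) :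
    F x - F y ≤ ⟪gF x, x - y⟫ := by
  obtain ⟨z, hz, hFz⟩ := domain_mvt (f' := fun z ↦ InnerProductSpace.toDual ℝ E (gF z))
    (fun z hz ↦ (hF z hz).hasFDerivAt.hasFDerivWithinAt) hS hy hx
  rw [InnerProductSpace.toDual_apply_apply] at hFz
  obtain ⟨a, b, ha, hb, hab, rfl⟩ := hz
  obtain rfl : b = 1 - a := eq_sub_of_add_eq' hab
  rw [hFz, ← sub_nonneg, ← inner_sub_left]
  rcases ha.eq_or_lt with rfl | ha_pos
  · simp
  have hmono_z := hmono x hx _ (hS.segment_subset hy hx ⟨a, 1 - a, ha, hb, hab, rfl⟩)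
  rw [show x - (a • y + (1 - a) • x) = a • (x - y) by module, real_inner_smul_right] at hmono_z
  exact (mul_nonneg_iff_of_pos_left ha_pos).1 hmono_z

theorem sub_le_inv_mul_norm_sq_of_strongly_monotoneOn {S : Set E} {F : E → ℝ} {gF : E → E}
    {m : ℝ} (hS : Convex ℝ S) (hF : ∀ x ∈ S, HasGradientAt F (gF x) x) (hm : 0 < m)
    (hmono : ∀ x ∈ S, ∀ y ∈ S, m * ‖x - y‖ ^ 2 ≤ ⟪gF x - gF y, x - y⟫)
    {xbar : E} (hxbar : xbar ∈ S) (hcrit : -gF xbar ∈ normalCone S xbar)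
    {x ξ : E} (hx : x ∈ S) (hξ : ξ ∈ normalCone S x) :
    F x - F xbar ≤ m⁻¹ * ‖gF x + ξ‖ ^ 2 := by
  have hconvex : F x - F xbar ≤ ⟪gF x, x - xbar⟫ :=
    sub_le_inner_gradient_of_monotoneOn hS hF
      (fun x hx y hy ↦ (mul_nonneg hm.le (sq_nonneg _)).trans (hmono x hx y hy)) hx hxbar
  have hξ_nonneg : 0 ≤ ⟪ξ, x - xbar⟫ := inner_sub_nonneg_of_mem_normalCone hξ hxbar
  have hcrit_nonneg : 0 ≤ ⟪gF xbar, x - xbar⟫ := by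
    simpa [inner_neg_left] using hcrit x hx
  have herror : m * ‖x - xbar‖ ^ 2 ≤ ⟪gF x + ξ, x - xbar⟫ := by
    have := hmono x hx xbar hxbar
    rw [inner_sub_left] at this
    rw [inner_add_left]
    linarith
  calc F x - F xbar ≤ ⟪gF x + ξ, x - xbar⟫ := by rw [inner_add_left]; linarith
    _ ≤ m⁻¹ * ‖gF x + ξ‖ ^ 2 := inner_le_inv_mul_norm_sq_of_mul_norm_sq_le_inner hm herror

end

theorem stmt_15_general (n : ℕ) (u : EuclideanSpace ℝ (Fin n)) (R : ℝ)
    (S : Set (EuclideanSpace ℝ (Fin n)))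
    (hSdef : S = {y | ‖y - u‖ ≤ R})
    (F : EuclideanSpace ℝ (Fin n) → ℝ)
    (gF : EuclideanSpace ℝ (Fin n) → EuclideanSpace ℝ (Fin n))
    (hF : ∀ x, HasGradientAt F (gF x) x)
    (m : ℝ) (hm : 0 < m)
    (hmono : ∀ x ∈ S, ∀ y ∈ S, m * ‖x - y‖ ^ 2 ≤ ⟪gF x - gF y, x - y⟫)
    (xbar : EuclideanSpace ℝ (Fin n)) (hxbar : xbar ∈ S)
    (hcrit : ∀ y ∈ S, ⟪-gF xbar, y - xbar⟫ ≤ 0) :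
    ∃ σ : ℝ, 0 < σ ∧ ∃ V : Set (EuclideanSpace ℝ (Fin n)), IsOpen V ∧ xbar ∈ V ∧
      ∀ x ∈ V ∩ S, ∀ ξ : EuclideanSpace ℝ (Fin n),
        (∀ y ∈ S, ⟪ξ, y - x⟫ ≤ 0) → F x - F xbar ≤ σ * ‖gF x + ξ‖ ^ 2 := by
  have hS : Convex ℝ S := by
    simpa only [hSdef, Metric.closedBall, dist_eq_norm] using convex_closedBall u R
  refine ⟨m⁻¹, inv_pos.2 hm, Set.univ, isOpen_univ, Set.mem_univ _, ?_⟩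
  rintro x ⟨-, hx⟩ ξ hξ
  exact sub_le_inv_mul_norm_sq_of_strongly_monotoneOn hS (fun x _ ↦ hF x) hm hmono hxbar hcrit
    hx hξ

/-- Let `S` be a closed Euclidean ball, and let `F` be differentiable with
`L`-Lipschitz gradient on `S` and strongly monotone gradient on `S` with modulus `m > 0`.
If `x̄` is a critical point of `F` over `S` (i.e. `−∇F(x̄) ∈ N_S(x̄)`), then there are
`σ > 0` and an open neighborhood `V` of `x̄` such that
`F(x) − F(x̄) ≤ σ‖∇F(x) + ξ‖²` for all `x ∈ V ∩ S` and `ξ ∈ N_S(x)`: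
the KL property with exponent `1/2`. -/
theorem stmt_15 (n : ℕ) (u : EuclideanSpace ℝ (Fin n)) (R : ℝ) (hR : 0 < R)
    (S : Set (EuclideanSpace ℝ (Fin n)))
    (hSdef : S = {y | ‖y - u‖ ≤ R})
    (F : EuclideanSpace ℝ (Fin n) → ℝ)
    (gF : EuclideanSpace ℝ (Fin n) → EuclideanSpace ℝ (Fin n))
    (hF : ∀ x, HasGradientAt F (gF x) x)
    (L m : ℝ) (hm : 0 < m)
    (hLip : ∀ x ∈ S, ∀ y ∈ S, ‖gF x - gF y‖ ≤ L * ‖x - y‖)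
    (hmono : ∀ x ∈ S, ∀ y ∈ S, m * ‖x - y‖ ^ 2 ≤ ⟪gF x - gF y, x - y⟫)
    (xbar : EuclideanSpace ℝ (Fin n)) (hxbar : xbar ∈ S)
    (hcrit : ∀ y ∈ S, ⟪-gF xbar, y - xbar⟫ ≤ 0) :
    ∃ σ : ℝ, 0 < σ ∧ ∃ V : Set (EuclideanSpace ℝ (Fin n)), IsOpen V ∧ xbar ∈ V ∧
      ∀ x ∈ V ∩ S, ∀ ξ : EuclideanSpace ℝ (Fin n),
        (∀ y ∈ S, ⟪ξ, y - x⟫ ≤ 0) → F x - F xbar ≤ σ * ‖gF x + ξ‖ ^ 2 :=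
  stmt_15_general n u R S hSdef F gF hF m hm hmono xbar hxbar hcrit
end

section
/- Let T : ℝ^N → ℝ^M be a linear map, μ > 0, r₂ > 0, λ ≥ 0, and let S ⊆ ℝ^N be a convex set such that ‖T x‖ ≥ μ for every x ∈ S. Set L := ‖T‖²(2r₂/μ + λ), where ‖T‖ is the operator norm of T. Then the function x ↦ (L/2)‖x‖² − r₂‖T x‖ − (λ/2)‖T x‖² is convex on S; equivalently, the function x ↦ −r₂‖T x‖ − (λ/2)‖T x‖² is weakly convex on S with modulus L. -/
/-!
`c‖x‖² - h` is convex exactly when the Jensen defect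
`a h x + b h y - h (a x + b y)` is at most `c a b ‖x - y‖²`, because that defect is exactly
`a b ‖x - y‖²` for `‖·‖²`. For `‖T·‖²` the defect is `a b ‖T x - T y‖² ≤ ‖T‖² a b ‖x - y‖²`.
For the norm itself, multiplying its defect by `a‖u‖ + b‖v‖ + ‖a u + b v‖ ≥ 2μ` gives the defect of
`‖·‖²` minus a nonnegative term, so on the region `‖T x‖ ≥ μ` the defect of `‖T·‖` is at most
`‖T‖² a b ‖x - y‖² / (2μ)`.
-/

open Set

variable {E F : Type*} [NormedAddCommGroup E] [InnerProductSpace ℝ E]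
  [NormedAddCommGroup F] [InnerProductSpace ℝ F]

theorem mul_norm_sq_add_mul_norm_sq_sub_norm_sq (u v : E) {a b : ℝ} (hab : a + b = 1) :
    a * ‖u‖ ^ 2 + b * ‖v‖ ^ 2 - ‖a • u + b • v‖ ^ 2 = a * b * ‖u - v‖ ^ 2 := by
  rw [norm_add_sq_real, norm_sub_sq_real, norm_smul, norm_smul, real_inner_smul_left,
    real_inner_smul_right, Real.norm_eq_abs, Real.norm_eq_abs, mul_pow, mul_pow, sq_abs, sq_abs]
  obtain rfl := eq_sub_of_add_eq hab
  ring

theorem mul_norm_add_mul_norm_sub_norm_mul_le (u v : E) {a b μ : ℝ} (ha : 0 ≤ a) (hb : 0 ≤ b)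
    (hab : a + b = 1) (hμ : μ ≤ ‖a • u + b • v‖) :
    (a * ‖u‖ + b * ‖v‖ - ‖a • u + b • v‖) * (2 * μ) ≤ a * b * ‖u - v‖ ^ 2 := by
  set A := a * ‖u‖ + b * ‖v‖
  set w := ‖a • u + b • v‖
  have htriangle : w ≤ A := by
    simpa [smul_eq_mul] using (convexOn_norm convex_univ).2 (mem_univ u) (mem_univ v) ha hb hab
  have hreal : a * ‖u‖ ^ 2 + b * ‖v‖ ^ 2 - A ^ 2 = a * b * (‖u‖ - ‖v‖) ^ 2 := by
    obtain rfl := eq_sub_of_add_eq hab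
    ring
  calc (A - w) * (2 * μ) ≤ (A - w) * (A + w) := by
        gcongr
        linarith
    _ = a * b * ‖u - v‖ ^ 2 - a * b * (‖u‖ - ‖v‖) ^ 2 := by
        rw [← mul_norm_sq_add_mul_norm_sq_sub_norm_sq u v hab, ← hreal]
        ring
    _ ≤ a * b * ‖u - v‖ ^ 2 := sub_le_self _ (by positivity)

theorem convexOn_mul_norm_sq_sub {S : Set E} (hS : Convex ℝ S) {c : ℝ} {h : E → ℝ}
    (hh : ∀ ⦃x⦄, x ∈ S → ∀ ⦃y⦄, y ∈ S → ∀ ⦃a b : ℝ⦄, 0 ≤ a → 0 ≤ b → a + b = 1 →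
      a * h x + b * h y - h (a • x + b • y) ≤ c * (a * b * ‖x - y‖ ^ 2)) :
    ConvexOn ℝ S fun x => c * ‖x‖ ^ 2 - h x := by
  refine ⟨hS, fun x hx y hy a b ha hb hab => ?_⟩
  have hdefect := mul_norm_sq_add_mul_norm_sq_sub_norm_sq x y hab
  simp only [smul_eq_mul]
  linear_combination hh hx hy ha hb hab - c * hdefect

theorem norm_map_sub_map_sq_le (T : E →L[ℝ] F) (x y : E) :
    ‖T x - T y‖ ^ 2 ≤ ‖T‖ ^ 2 * ‖x - y‖ ^ 2 := by
  rw [← map_sub, ← mul_pow]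
  exact pow_le_pow_left₀ (norm_nonneg _) (T.le_opNorm _) 2

theorem convexOn_opNorm_sq_mul_norm_sq_sub_norm_map_sq (T : E →L[ℝ] F) :
    ConvexOn ℝ univ fun x => ‖T‖ ^ 2 * ‖x‖ ^ 2 - ‖T x‖ ^ 2 := by
  refine convexOn_mul_norm_sq_sub convex_univ fun x _ y _ a b _ _ hab => ?_
  rw [map_add, map_smul, map_smul, mul_norm_sq_add_mul_norm_sq_sub_norm_sq _ _ hab,
    mul_left_comm]
  gcongr
  exact norm_map_sub_map_sq_le T x y

theorem convexOn_opNorm_sq_div_mul_norm_sq_sub_norm_map (T : E →L[ℝ] F) {S : Set E}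
    (hS : Convex ℝ S) {μ : ℝ} (hμ : 0 < μ) (hTS : ∀ x ∈ S, μ ≤ ‖T x‖) :
    ConvexOn ℝ S fun x => ‖T‖ ^ 2 / (2 * μ) * ‖x‖ ^ 2 - ‖T x‖ := by
  refine convexOn_mul_norm_sq_sub hS fun x hx y hy a b ha hb hab => ?_
  have hμw : μ ≤ ‖a • T x + b • T y‖ := by
    simpa only [map_add, map_smul] using hTS _ (hS hx hy ha hb hab)
  have hdefect := mul_norm_add_mul_norm_sub_norm_mul_le (T x) (T y) ha hb hab hμw
  rw [map_add, map_smul, map_smul, div_mul_eq_mul_div, le_div_iff₀ (by positivity)]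
  calc _ ≤ a * b * ‖T x - T y‖ ^ 2 := by linarith
    _ ≤ a * b * (‖T‖ ^ 2 * ‖x - y‖ ^ 2) := by
        gcongr
        exact norm_map_sub_map_sq_le T x y
    _ = _ := by ring

/-- If `‖Tx‖ ≥ μ > 0` on the convex set `S` and
`L = ‖T‖²(2r₂/μ + λ)`, then `x ↦ (L/2)‖x‖² − r₂‖Tx‖ − (λ/2)‖Tx‖²` is convex on `S`,
i.e. `x ↦ −r₂‖Tx‖ − (λ/2)‖Tx‖²` is weakly convex on `S` with modulus `L`. -/
theorem stmt_17 (N M : ℕ)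
    (T : EuclideanSpace ℝ (Fin N) →L[ℝ] EuclideanSpace ℝ (Fin M))
    (μ r₂ lam : ℝ) (hμ : 0 < μ) (hr₂ : 0 < r₂) (hlam : 0 ≤ lam)
    (S : Set (EuclideanSpace ℝ (Fin N))) (hS : Convex ℝ S)
    (hTS : ∀ x ∈ S, μ ≤ ‖T x‖) :
    ConvexOn ℝ S (fun x =>
      (‖T‖ ^ 2 * (2 * r₂ / μ + lam) / 2) * ‖x‖ ^ 2 - r₂ * ‖T x‖ - (lam / 2) * ‖T x‖ ^ 2) := by
  have hnorm := convexOn_opNorm_sq_div_mul_norm_sq_sub_norm_map T hS hμ hTS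
  have hsq := (convexOn_opNorm_sq_mul_norm_sq_sub_norm_map_sq T).subset (subset_univ S) hS
  -- `L / 2` exceeds the sharp constant `‖T‖² (r₂ / μ + λ) / 2` by this convex multiple of `‖x‖²`.
  have hslack := ((convexOn_norm hS).pow (fun x _ => norm_nonneg x) 2).smul
    (by positivity : 0 ≤ r₂ * ‖T‖ ^ 2 / (2 * μ))
  refine (((hnorm.smul hr₂.le).add (hsq.smul (by positivity : 0 ≤ lam / 2))).add hslack).congr
    fun x _ => ?_
  simp only [Pi.add_apply, Pi.pow_apply, smul_eq_mul]
  ring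
end
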